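/- arXiv:2402.08781 — 11 statements merged into one kernel-verified Lean document; each statement's English description precedes it below -/
import Mathlib

section
/- If an allocation rule of the form x(α,β) = x̂(η(α,β)) is implementable (i.e., there exist payment and ordeal rules making the direct mechanism incentive compatible and individually rational), then x̂ is weakly increasing. -/
open Set Metric

section Aux

variable {η : ℝ × ℝ → ℝ} {c : ℝ}

lemma aux_diff_slice (hη : ContDiff ℝ 2 η) (a : ℝ) :
    Differentiable ℝ (fun b => η (a, b)) :=
  (hη.differentiable (by norm_num)).comp ((differentiable_const a).prodMk differentiable_id)

lemma aux_growth (hη : ContDiff ℝ 2 η) (hc : 0 < c)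
    (hηβ : ∀ a b : ℝ, c ≤ deriv (fun b' => η (a, b')) b) :
    ∀ a b b' : ℝ, b ≤ b' → η (a, b) + c * (b' - b) ≤ η (a, b') := by
  intro a b b' hbb
  have hdiff := aux_diff_slice hη a
  have hF : ∀ x : ℝ, HasDerivAt (fun y => η (a, y) - c * y)
      (deriv (fun b => η (a, b)) x - c * 1) x := fun x =>
    ((hdiff x).hasDerivAt).sub ((hasDerivAt_id x).const_mul c)
  have hmono : Monotone (fun y => η (a, y) - c * y) := by
    apply monotone_of_deriv_nonneg
    · exact hdiff.sub (differentiable_id.const_mul c)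
    · intro x
      rw [(hF x).deriv]
      have := hηβ a x
      linarith
  have h := hmono hbb
  simp only at h
  linarith

lemma aux_mono (hη : ContDiff ℝ 2 η) (hc : 0 < c)
    (hηβ : ∀ a b : ℝ, c ≤ deriv (fun b' => η (a, b')) b)
    (a b b' : ℝ) (h : η (a, b) ≤ η (a, b')) : b ≤ b' := by
  by_contra hlt
  push_neg at hlt
  have hg := aux_growth hη hc hηβ a b' b hlt.le
  nlinarith [mul_pos hc (sub_pos.mpr hlt)]

lemma aux_gap (hη : ContDiff ℝ 2 η) (hc : 0 < c)
    (hηβ : ∀ a b : ℝ, c ≤ deriv (fun b' => η (a, b')) b)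
    (a b b' : ℝ) : c * |b' - b| ≤ |η (a, b') - η (a, b)| := by
  rcases le_total b b' with h | h
  · have hg := aux_growth hη hc hηβ a b b' h
    have h1 : 0 ≤ c * (b' - b) := mul_nonneg hc.le (sub_nonneg.mpr h)
    rw [abs_of_nonneg (sub_nonneg.mpr h), abs_of_nonneg (by linarith)]
    linarith
  · have hg := aux_growth hη hc hηβ a b' b h
    have h1 : 0 ≤ c * (b - b') := mul_nonneg hc.le (sub_nonneg.mpr h)
    rw [abs_of_nonpos (sub_nonpos.mpr h), abs_of_nonpos (by linarith)]
    rw [mul_neg]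
    linarith

lemma aux_surj (hη : ContDiff ℝ 2 η) (hc : 0 < c)
    (hηβ : ∀ a b : ℝ, c ≤ deriv (fun b' => η (a, b')) b) (a e : ℝ) :
    ∃ b, η (a, b) = e := by
  have hgrow := aux_growth hη hc hηβ
  have hcont : Continuous (fun b => η (a, b)) := (aux_diff_slice hη a).continuous
  rcases le_total (η (a, 0)) e with h | h
  · set B := (e - η (a, 0)) / c with hB
    have hB0 : (0:ℝ) ≤ B := div_nonneg (by linarith) hc.le
    have hcB : c * B = e - η (a, 0) := by
      rw [hB]; field_simp
    have h2 : e ≤ η (a, B) := by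
      have hg := hgrow a 0 B hB0
      have : c * (B - 0) = c * B := by ring
      linarith [hg, this.symm ▸ hcB]
    obtain ⟨b, _, hb⟩ := intermediate_value_Icc hB0 hcont.continuousOn ⟨h, h2⟩
    exact ⟨b, hb⟩
  · set B := (e - η (a, 0)) / c with hB
    have hB0 : B ≤ (0:ℝ) := div_nonpos_of_nonpos_of_nonneg (by linarith) hc.le
    have hcB : c * B = e - η (a, 0) := by
      rw [hB]; field_simp
    have h2 : η (a, B) ≤ e := by
      have hg := hgrow a B 0 hB0
      have hr : c * (0 - B) = -(c * B) := by ring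
      rw [hr, hcB] at hg
      linarith
    obtain ⟨b, _, hb⟩ := intermediate_value_Icc hB0 hcont.continuousOn ⟨h2, h⟩
    exact ⟨b, hb⟩

lemma aux_chain (g xh : ℝ → ℝ) (hg : ContinuousOn g (Icc 0 1)) (δ : ℝ) (hδ : 0 < δ)
    (loc : ∀ s ∈ Icc (0:ℝ) 1, ∀ t ∈ Icc (0:ℝ) 1, s ≤ t → t - s ≤ δ → g s ≤ g t →
      xh (g s) ≤ xh (g t)) :
    ∀ n : ℕ, ∀ s ∈ Icc (0:ℝ) 1, ∀ t ∈ Icc (0:ℝ) 1, s ≤ t → t - s ≤ n * δ → g s ≤ g t →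
      xh (g s) ≤ xh (g t) := by
  intro n
  induction n with
  | zero =>
    intro s hs t ht hst hbound hgle
    have : t = s := by push_cast at hbound; linarith
    rw [this]
  | succ n ih =>
    intro s hs t ht hst hbound hgle
    rcases le_or_gt (t - s) δ with hsmall | hbig
    · exact loc s hs t ht hst hsmall hgle
    · set u := s + δ with hu
      have hu1 : u ∈ Icc (0:ℝ) 1 := ⟨by linarith [hs.1], by linarith [ht.2]⟩
      have hut : u ≤ t := by linarith
      have htu : t - u ≤ n * δ := by push_cast at hbound ⊢; linarith
      rcases le_or_gt (g s) (g u) with h1 | h1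
      · rcases le_or_gt (g u) (g t) with h2 | h2
        · exact le_trans (loc s hs u hu1 (by linarith) (by linarith) h1)
            (ih u hu1 t ht hut htu h2)
        · have hsub : Icc s u ⊆ Icc (0:ℝ) 1 := Icc_subset_Icc hs.1 hu1.2
          obtain ⟨r, hr, hgr⟩ := intermediate_value_Icc (by linarith : s ≤ u)
            (hg.mono hsub) ⟨hgle, h2.le⟩
          have hr01 : r ∈ Icc (0:ℝ) 1 := hsub hr
          have hres := loc s hs r hr01 hr.1 (by linarith [hr.2]) (by rw [hgr]; exact hgle)
          rw [hgr] at hres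
          exact hres
      · have hsub : Icc u t ⊆ Icc (0:ℝ) 1 := Icc_subset_Icc hu1.1 ht.2
        obtain ⟨r, hr, hgr⟩ := intermediate_value_Icc hut (hg.mono hsub) ⟨h1.le, hgle⟩
        have hr01 : r ∈ Icc (0:ℝ) 1 := hsub hr
        have hres := ih r hr01 t ht hr.2 (by linarith [hr.1]) (by rw [hgr]; exact hgle)
        rw [hgr] at hres
        exact hres

end Aux

/-- If an allocation rule of the form `x(α,β) = x̂(η(α,β))` is implementable
(some payment and ordeal rules make the mechanism IC and IR), then `x̂` is weakly increasing
(on the merit levels attained on `Θ`). -/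
theorem stmt0
    (Θ : Set (ℝ × ℝ)) (hΘopen : IsOpen Θ) (hΘconv : Convex ℝ Θ)
    (hΘbdd : Bornology.IsBounded Θ) (hΘpos : ∀ θ ∈ Θ, 0 < θ.2)
    (w z : ℝ → ℝ)
    (hwC2 : ContDiff ℝ 2 w) (hzC2 : ContDiff ℝ 2 z)
    (hwpos : ∀ a, 0 < w a) (hzpos : ∀ a, 0 < z a)
    (hw' : ∀ a, 0 < deriv w a) (hz' : ∀ a, deriv z a < 0)
    (η : ℝ × ℝ → ℝ) (hηC2 : ContDiff ℝ 2 η)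
    (c : ℝ) (hc : 0 < c)
    (hηα : ∀ a b : ℝ, c ≤ deriv (fun a' => η (a', b)) a)
    (hηβ : ∀ a b : ℝ, c ≤ deriv (fun b' => η (a, b')) b)
    (xhat : ℝ → ℝ) (x p q : ℝ × ℝ → ℝ)
    (hxform : ∀ θ ∈ Θ, x θ = xhat (η θ))
    (hxrange : ∀ θ ∈ Θ, x θ ∈ Icc (0:ℝ) 1)
    (hqpos : ∀ θ ∈ Θ, 0 ≤ q θ)
    (hIC : ∀ θ ∈ Θ, ∀ θ' ∈ Θ,
      θ.2 * x θ - w θ.1 * p θ - z θ.1 * q θ ≥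
      θ.2 * x θ' - w θ.1 * p θ' - z θ.1 * q θ')
    (hIR : ∀ θ ∈ Θ, 0 ≤ θ.2 * x θ - w θ.1 * p θ - z θ.1 * q θ) :
    ∀ θ1 ∈ Θ, ∀ θ2 ∈ Θ, η θ1 ≤ η θ2 → xhat (η θ1) ≤ xhat (η θ2) := by
  intro θ1 hθ1 θ2 hθ2 hle
  -- the segment from θ1 to θ2
  set σ : ℝ → ℝ × ℝ := fun t => (1 - t) • θ1 + t • θ2 with hσdef
  set S := segment ℝ θ1 θ2 with hSdef
  have hσcont : Continuous σ := by
    apply Continuous.add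
    · exact (continuous_const.sub continuous_id).smul continuous_const
    · exact continuous_id.smul continuous_const
  have hScomp : IsCompact S := by
    rw [hSdef, segment_eq_image ℝ θ1 θ2]
    exact isCompact_Icc.image hσcont
  have hSsub : S ⊆ Θ := hΘconv.segment_subset hθ1 hθ2
  obtain ⟨ε, hε, hεsub⟩ := hScomp.exists_cthickening_subset_open hΘopen hSsub
  have hσS : ∀ t ∈ Icc (0:ℝ) 1, σ t ∈ S := fun t ht =>
    ⟨1 - t, t, by linarith [ht.2], ht.1, by ring, rfl⟩
  have hσΘ : ∀ t ∈ Icc (0:ℝ) 1, σ t ∈ Θ := fun t ht => hSsub (hσS t ht)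
  have hσ1 : ∀ t, (σ t).1 = (1 - t) * θ1.1 + t * θ2.1 := by
    intro t; simp [hσdef]
  have hσ2 : ∀ t, (σ t).2 = (1 - t) * θ1.2 + t * θ2.2 := by
    intro t; simp [hσdef]
  -- a compact convex neighborhood on which fderiv η is bounded
  set Da := |θ2.1 - θ1.1| with hDa
  set Db := |θ2.2 - θ1.2| with hDb
  have hDa0 : 0 ≤ Da := abs_nonneg _
  have hDb0 : 0 ≤ Db := abs_nonneg _
  set R := Da + Db + ε + 1 with hR
  have hR0 : 0 ≤ R := by positivity
  set K := cthickening R S with hK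
  have hKcomp : IsCompact K := hScomp.cthickening
  have hKconv : Convex ℝ K := (convex_segment θ1 θ2).cthickening R
  have hηdiff : Differentiable ℝ η := hηC2.differentiable (by norm_num)
  obtain ⟨L0, hL0⟩ := hKcomp.exists_bound_of_continuousOn
    ((hηC2.continuous_fderiv (by norm_num)).norm).continuousOn
  set L := max L0 0 with hL
  have hL0' : 0 ≤ L := le_max_right _ _
  have hLb : ∀ y ∈ K, ‖fderiv ℝ η y‖ ≤ L := by
    intro y hy
    refine le_trans (le_trans (le_abs_self _) ?_) (le_max_left _ _)
    simpa using hL0 y hy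
  have hLip : ∀ P ∈ K, ∀ Q ∈ K, ‖η Q - η P‖ ≤ L * ‖Q - P‖ := fun P hP Q hQ =>
    Convex.norm_image_sub_le_of_norm_fderiv_le (fun y _ => hηdiff y) hLb hKconv hP hQ
  -- the merit along the segment
  set g : ℝ → ℝ := fun t => η (σ t) with hg
  have hgc : ContinuousOn g (Icc 0 1) := (hηC2.continuous.comp hσcont).continuousOn
  -- choice of δ
  set C0 := L * Da / c + Db with hC0
  have hC00 : 0 ≤ C0 := by positivity
  set δ := ε / (C0 + 1) with hδdef
  have hδ : 0 < δ := div_pos hε (by linarith)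
  have hδC0 : δ * C0 ≤ ε := by
    have h1 : δ * (C0 + 1) = ε := by
      rw [hδdef]; field_simp
    nlinarith
  -- local comonotonicity step
  have loc : ∀ s ∈ Icc (0:ℝ) 1, ∀ t ∈ Icc (0:ℝ) 1, s ≤ t → t - s ≤ δ → g s ≤ g t →
      xhat (g s) ≤ xhat (g t) := by
    intro s hs t ht hst hdel hgle
    set P := σ s with hPdef
    have hPΘ : P ∈ Θ := hσΘ s hs
    obtain ⟨b, hb⟩ := aux_surj hηC2 hc hηβ P.1 (g t)
    -- the mixed point (P.1, (σ t).2) lies in K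
    have hσtK : σ t ∈ K := Metric.self_subset_cthickening S (hσS t ht)
    have hdiff1 : P.1 - (σ t).1 = (t - s) * (θ1.1 - θ2.1) := by
      rw [hσ1, hσ1]; ring
    have habs1 : |P.1 - (σ t).1| = (t - s) * Da := by
      rw [hdiff1, abs_mul, abs_of_nonneg (by linarith : (0:ℝ) ≤ t - s), hDa, abs_sub_comm]
    have hts1 : t - s ≤ 1 := by
      have := hs.1; have := ht.2; linarith
    have hMK : ((P.1, (σ t).2) : ℝ × ℝ) ∈ K := by
      apply Metric.mem_cthickening_of_dist_le _ (σ t) _ _ (hσS t ht)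
      rw [dist_eq_norm]
      have heq : ((P.1, (σ t).2) : ℝ × ℝ) - σ t = (P.1 - (σ t).1, 0) := by
        simp [Prod.ext_iff]
      rw [heq, Prod.norm_def]
      simp only [norm_zero, Real.norm_eq_abs]
      rw [habs1]
      have hda : (t - s) * Da ≤ Da := by nlinarith
      have hmax : max ((t-s)*Da) 0 ≤ Da := max_le (by linarith) hDa0
      have hdr : Da ≤ R := by rw [hR]; linarith
      exact le_trans hmax hdr
    -- bound |b - (σ t).2|
    have hlip1 : |η (P.1, (σ t).2) - η (σ t)| ≤ L * ((t - s) * Da) := by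
      have h := hLip (σ t) hσtK (P.1, (σ t).2) hMK
      have heq : ((P.1, (σ t).2) : ℝ × ℝ) - σ t = (P.1 - (σ t).1, 0) := by
        simp [Prod.ext_iff]
      rw [heq, Prod.norm_def] at h
      simp only [norm_zero, Real.norm_eq_abs] at h
      rw [habs1] at h
      have hmax : ((t-s)*Da) ⊔ 0 = (t-s)*Da := max_eq_left (by nlinarith)
      rw [hmax] at h
      calc |η (P.1, (σ t).2) - η (σ t)| = ‖η (P.1, (σ t).2) - η (σ t)‖ := rfl
        _ ≤ L * ((t-s)*Da) := h
    have hgap : c * |b - (σ t).2| ≤ |η (P.1, b) - η (P.1, (σ t).2)| :=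
      aux_gap hηC2 hc hηβ P.1 ((σ t).2) b
    have hbb : |b - (σ t).2| ≤ L * ((t - s) * Da) / c := by
      rw [le_div_iff₀ hc]
      have hsteq : η (σ t) = η ((σ t).1, (σ t).2) := by rfl
      have : |η (P.1, b) - η (P.1, (σ t).2)| ≤ L * ((t-s)*Da) := by
        rw [hb]
        calc |g t - η (P.1, (σ t).2)| = |η (P.1, (σ t).2) - η (σ t)| := by
              rw [hg]; rw [abs_sub_comm]
          _ ≤ L * ((t-s)*Da) := hlip1
      linarith [hgap]
    -- the vertical comparison point Q := (P.1, b) is in Θ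
    have hdiff2 : (σ t).2 - P.2 = (t - s) * (θ2.2 - θ1.2) := by
      rw [hσ2, hσ2]; ring
    have habs2 : |(σ t).2 - P.2| = (t - s) * Db := by
      rw [hdiff2, abs_mul, abs_of_nonneg (by linarith : (0:ℝ) ≤ t - s)]
    have hQdist : dist ((P.1, b) : ℝ × ℝ) P ≤ ε := by
      rw [dist_eq_norm]
      have heq : ((P.1, b) : ℝ × ℝ) - P = (0, b - P.2) := by
        simp [Prod.ext_iff]
      rw [heq, Prod.norm_def]
      simp only [norm_zero, Real.norm_eq_abs]
      have h1 : |b - P.2| ≤ |b - (σ t).2| + |(σ t).2 - P.2| := by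
        calc |b - P.2| = |(b - (σ t).2) + ((σ t).2 - P.2)| := by ring_nf
          _ ≤ |b - (σ t).2| + |(σ t).2 - P.2| := abs_add_le _ _
      have hbb' : |b - (σ t).2| ≤ (t - s) * (L * Da / c) := by
        have hh : L * ((t - s) * Da) / c = (t - s) * (L * Da / c) := by ring
        linarith [hbb, hh.symm.le]
      have h2 : |b - P.2| ≤ (t - s) * (L * Da / c) + (t - s) * Db := by
        rw [habs2] at h1
        linarith
      have h3 : |b - P.2| ≤ δ * C0 := by
        rw [hC0]
        have hts : t - s ≤ δ := hdel
        have hLDc : 0 ≤ L * Da / c := by positivity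
        have e1 : (t - s) * (L * Da / c) ≤ δ * (L * Da / c) :=
          mul_le_mul_of_nonneg_right hts hLDc
        have e2 : (t - s) * Db ≤ δ * Db := mul_le_mul_of_nonneg_right hts hDb0
        have : δ * (L * Da / c + Db) = δ * (L * Da / c) + δ * Db := by ring
        linarith
      have h4 : |b - P.2| ≤ ε := le_trans h3 hδC0
      exact max_le (by linarith) h4
    have hQΘ : ((P.1, b) : ℝ × ℝ) ∈ Θ :=
      hεsub (Metric.mem_cthickening_of_dist_le _ P ε S (hσS s hs) hQdist)
    -- η P ≤ η Q so P.2 ≤ b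
    have hηPQ : η (P.1, P.2) ≤ η (P.1, b) := by
      rw [hb]
      exact hgle
    have hβle : P.2 ≤ b := aux_mono hηC2 hc hηβ P.1 P.2 b hηPQ
    rcases eq_or_lt_of_le hβle with heq | hblt
    · -- Q = P
      have : g s = g t := by
        rw [← hb, ← heq]
      rw [this]
    · -- strict: use IC both ways
      have h1 : P.2 * x P - w P.1 * p P - z P.1 * q P ≥
          P.2 * x (P.1, b) - w P.1 * p (P.1, b) - z P.1 * q (P.1, b) :=
        hIC P hPΘ (P.1, b) hQΘ
      have h2 : b * x (P.1, b) - w P.1 * p (P.1, b) - z P.1 * q (P.1, b) ≥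
          b * x P - w P.1 * p P - z P.1 * q P :=
        hIC (P.1, b) hQΘ P hPΘ
      have hsum : P.2 * x P + b * x (P.1, b) ≥ P.2 * x (P.1, b) + b * x P := by
        linarith only [h1, h2]
      have hfac : 0 ≤ (b - P.2) * (x (P.1, b) - x P) := by
        have hr : (b - P.2) * (x (P.1, b) - x P) =
            (P.2 * x P + b * x (P.1, b)) - (P.2 * x (P.1, b) + b * x P) := by ring
        linarith only [hsum, hr.le, hr.ge]
      have hxle : x P ≤ x (P.1, b) :=
        sub_nonneg.mp ((mul_nonneg_iff_of_pos_left (sub_pos.mpr hblt)).mp hfac)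
      calc xhat (g s) = x P := (hxform P hPΘ).symm
        _ ≤ x (P.1, b) := hxle
        _ = xhat (η (P.1, b)) := hxform _ hQΘ
        _ = xhat (g t) := by rw [hb]
  -- globalize by chaining
  obtain ⟨N, hN⟩ := exists_nat_gt (1 / δ)
  have hNδ : (1:ℝ) ≤ N * δ := by
    have : 1 / δ < N := hN
    rw [div_lt_iff₀ hδ] at this
    linarith
  have hg0 : g 0 = η θ1 := by
    simp [hg, hσdef]
  have hg1 : g 1 = η θ2 := by
    simp [hg, hσdef]
  have := aux_chain g xhat hgc δ hδ loc N 0 ⟨le_refl 0, zero_le_one⟩ 1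
    ⟨zero_le_one, le_refl 1⟩ zero_le_one (by linarith) (by rw [hg0, hg1]; exact hle)
  rw [hg0, hg1] at this
  exact this
end

section
/- Suppose ordeals are not used (q ≡ 0). Then every equitable and implementable allocation rule x(α,β) is constant. -/
open Set

/-- Mean value bound: if `c ≤ deriv f` everywhere, then `f` grows at least at rate `c`. -/
lemma grow_aux (f : ℝ → ℝ) (hf : Differentiable ℝ f) (c : ℝ)
    (hd : ∀ x, c ≤ deriv f x) {a b : ℝ} (hab : a ≤ b) :
    f a + c * (b - a) ≤ f b := by
  rcases eq_or_lt_of_le hab with h | h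
  · subst h; simp
  · obtain ⟨ξ, _, hξ⟩ := exists_hasDerivAt_eq_slope f (deriv f) h
      hf.continuous.continuousOn (fun x _ => (hf x).hasDerivAt)
    have hcξ := hd ξ
    rw [hξ] at hcξ
    have hba : 0 < b - a := by linarith
    rw [le_div_iff₀ hba] at hcξ
    linarith

/-- If ordeals are not used (`q ≡ 0`), every equitable and implementable
allocation rule is constant. -/
theorem stmt1
    (Θ : Set (ℝ × ℝ)) (hΘopen : IsOpen Θ) (hΘconv : Convex ℝ Θ)
    (hΘbdd : Bornology.IsBounded Θ) (hΘpos : ∀ θ ∈ Θ, 0 < θ.2)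
    (w : ℝ → ℝ) (hwC2 : ContDiff ℝ 2 w)
    (hwpos : ∀ a, 0 < w a) (hw' : ∀ a, 0 < deriv w a)
    (η : ℝ × ℝ → ℝ) (hηC2 : ContDiff ℝ 2 η)
    (c : ℝ) (hc : 0 < c)
    (hηα : ∀ a b : ℝ, c ≤ deriv (fun a' => η (a', b)) a)
    (hηβ : ∀ a b : ℝ, c ≤ deriv (fun b' => η (a, b')) b)
    (x : ℝ × ℝ → ℝ)
    (hxrange : ∀ θ ∈ Θ, x θ ∈ Icc (0:ℝ) 1)
    -- equity: equal merit implies equal allocation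
    (hEq : ∀ θ1 ∈ Θ, ∀ θ2 ∈ Θ, η θ1 = η θ2 → x θ1 = x θ2)
    -- implementability with payments only (q ≡ 0)
    (hImpl : ∃ p : ℝ × ℝ → ℝ,
      (∀ θ ∈ Θ, ∀ θ' ∈ Θ,
        θ.2 * x θ - w θ.1 * p θ ≥ θ.2 * x θ' - w θ.1 * p θ') ∧
      (∀ θ ∈ Θ, 0 ≤ θ.2 * x θ - w θ.1 * p θ)) :
    ∀ θ1 ∈ Θ, ∀ θ2 ∈ Θ, x θ1 = x θ2 := by
  obtain ⟨p, hIC, _hIR⟩ := hImpl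
  -- differentiability and monotonicity facts
  have hηdiff : Differentiable ℝ η := hηC2.differentiable (by norm_num)
  have hgdiff : ∀ a : ℝ, Differentiable ℝ (fun s => η (a, s)) := fun a =>
    hηdiff.comp ((differentiable_const a).prodMk differentiable_id)
  have hfdiff : ∀ b : ℝ, Differentiable ℝ (fun u => η (u, b)) := fun b =>
    hηdiff.comp (differentiable_id.prodMk (differentiable_const b))
  have hgmono : ∀ a : ℝ, StrictMono (fun s => η (a, s)) := fun a =>
    strictMono_of_deriv_pos (fun s => lt_of_lt_of_le hc (hηβ a s))
  have hfmono : ∀ b : ℝ, StrictMono (fun u => η (u, b)) := fun b =>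
    strictMono_of_deriv_pos (fun u => lt_of_lt_of_le hc (hηα u b))
  have hwmono : StrictMono w := strictMono_of_deriv_pos hw'
  -- equal merit forces equal payments
  have hpEq : ∀ θa ∈ Θ, ∀ θb ∈ Θ, η θa = η θb → p θa = p θb := by
    intro θa ha θb hb hη
    have hx := hEq θa ha θb hb hη
    have h1 := hIC θa ha θb hb
    have h2 := hIC θb hb θa ha
    have w1 := hwpos θa.1
    have w2 := hwpos θb.1
    rw [hx] at h1 h2
    apply le_antisymm
    · nlinarith
    · nlinarith
  -- payments weakly decreasing in α at fixed β
  have hpdec : ∀ a1 a2 b : ℝ, (a1, b) ∈ Θ → (a2, b) ∈ Θ → a2 < a1 →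
      p (a1, b) ≤ p (a2, b) := by
    intro a1 a2 b h1 h2 hlt
    have hIC1 := hIC (a1, b) h1 (a2, b) h2
    have hIC2 := hIC (a2, b) h2 (a1, b) h1
    have hw12 : w a2 < w a1 := hwmono hlt
    simp only at hIC1 hIC2
    nlinarith
  -- vertical segments lie in Θ
  have hseg : ∀ a b2 b1 : ℝ, (a, b2) ∈ Θ → (a, b1) ∈ Θ → ∀ t ∈ Icc b2 b1, (a, t) ∈ Θ := by
    intro a b2 b1 h2 h1 t ht
    obtain ⟨ht1, ht2⟩ := ht
    rcases eq_or_lt_of_le (le_trans ht1 ht2) with he | hlt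
    · have : t = b2 := le_antisymm (he ▸ ht2) ht1
      exact this ▸ h2
    · have hd : (0:ℝ) < b1 - b2 := by linarith
      have hmem := hΘconv h2 h1
        (div_nonneg (by linarith : (0:ℝ) ≤ b1 - t) hd.le)
        (div_nonneg (by linarith : (0:ℝ) ≤ t - b2) hd.le)
        (by field_simp; ring)
      have heq : ((b1 - t) / (b1 - b2)) • ((a : ℝ), b2) + ((t - b2) / (b1 - b2)) • ((a : ℝ), b1)
          = (a, t) := by
        simp only [Prod.smul_mk, Prod.mk_add_mk, smul_eq_mul, Prod.mk.injEq]
        constructor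
        · field_simp; ring
        · field_simp; ring
      rwa [heq] at hmem
  -- key: payments weakly decreasing in β at fixed α
  have key : ∀ a b2 b1 : ℝ, (a, b2) ∈ Θ → (a, b1) ∈ Θ → b2 ≤ b1 →
      p (a, b1) ≤ p (a, b2) := by
    intro a b2 b1 h2 h1 hb
    -- local step
    have loc : ∀ t : ℝ, (a, t) ∈ Θ → ∃ δ > 0,
        (∀ s : ℝ, (a, s) ∈ Θ → t < s → s < t + δ → p (a, s) ≤ p (a, t)) ∧
        (∀ s : ℝ, (a, s) ∈ Θ → t - δ < s → s < t → p (a, t) ≤ p (a, s)) := by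
      intro t hat
      obtain ⟨r, hr, hball⟩ := Metric.isOpen_iff.1 hΘopen (a, t) hat
      have hcont : ContinuousAt (fun s => η (a, s)) t := (hgdiff a).continuous.continuousAt
      obtain ⟨δ, hδ, hδprop⟩ := Metric.continuousAt_iff.1 hcont (c * (r / 2)) (by positivity)
      refine ⟨δ, hδ, ?_, ?_⟩
      · intro s has hts hstδ
        have hds : dist s t < δ := by
          rw [Real.dist_eq, abs_of_pos (by linarith)]; linarith
        have hηclose := hδprop hds
        rw [Real.dist_eq, abs_lt] at hηclose
        have hηgt : η (a, t) < η (a, s) := hgmono a hts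
        have hup : η (a, t) + c * (r / 2) ≤ η (a + r / 2, t) := by
          have := grow_aux (fun u => η (u, t)) (hfdiff t) c (fun u => hηα u t)
            (show a ≤ a + r / 2 by linarith)
          simpa using this
        have hsub := intermediate_value_Icc (show a ≤ a + r / 2 by linarith)
          ((hfdiff t).continuous.continuousOn)
        obtain ⟨u, hu, huv⟩ := hsub ⟨hηgt.le, by linarith⟩
        have huΘ : (u, t) ∈ Θ := by
          apply hball
          rw [Metric.mem_ball, Prod.dist_eq]
          simp only [Real.dist_eq]
          rw [sub_self, abs_zero]
          have : |u - a| ≤ r / 2 := by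
            rw [abs_le]; constructor <;> [linarith [hu.1]; linarith [hu.2]]
          calc max |u - a| 0 = |u - a| := max_eq_left (abs_nonneg _)
            _ ≤ r / 2 := this
            _ < r := by linarith
        have hau : a < u := by
          rcases eq_or_lt_of_le hu.1 with he | h
          · exfalso; rw [← he] at huv; simp only at huv; linarith
          · exact h
        have hple := hpdec u a t huΘ hat hau
        have hpe : p (a, s) = p (u, t) := hpEq (a, s) has (u, t) huΘ (by exact huv.symm)
        linarith
      · intro s has hts hst
        have hds : dist s t < δ := by
          rw [Real.dist_eq, abs_of_neg (by linarith)]; linarith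
        have hηclose := hδprop hds
        rw [Real.dist_eq, abs_lt] at hηclose
        have hηlt : η (a, s) < η (a, t) := hgmono a hst
        have hdown : η (a - r / 2, t) ≤ η (a, t) - c * (r / 2) := by
          have := grow_aux (fun u => η (u, t)) (hfdiff t) c (fun u => hηα u t)
            (show a - r / 2 ≤ a by linarith)
          linarith [this]
        have hsub := intermediate_value_Icc (show a - r / 2 ≤ a by linarith)
          ((hfdiff t).continuous.continuousOn)
        obtain ⟨u, hu, huv⟩ := hsub ⟨by linarith, hηlt.le⟩
        have huΘ : (u, t) ∈ Θ := by
          apply hball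
          rw [Metric.mem_ball, Prod.dist_eq]
          simp only [Real.dist_eq]
          rw [sub_self, abs_zero]
          have : |u - a| ≤ r / 2 := by
            rw [abs_le]; constructor <;> [linarith [hu.1]; linarith [hu.2]]
          calc max |u - a| 0 = |u - a| := max_eq_left (abs_nonneg _)
            _ ≤ r / 2 := this
            _ < r := by linarith
        have hau : u < a := by
          rcases eq_or_lt_of_le hu.2 with he | h
          · exfalso; rw [he] at huv; simp only at huv; linarith
          · exact h
        have hple := hpdec a u t hat huΘ hau
        have hpe : p (a, s) = p (u, t) := hpEq (a, s) has (u, t) huΘ (by exact huv.symm)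
        linarith
    -- globalize via supremum argument
    set A : Set ℝ := {s | s ∈ Icc b2 b1 ∧ p (a, s) ≤ p (a, b2)} with hA
    have hA2 : b2 ∈ A := ⟨⟨le_refl _, hb⟩, le_refl _⟩
    have hAne : A.Nonempty := ⟨b2, hA2⟩
    have hAbdd : BddAbove A := ⟨b1, fun s hs => hs.1.2⟩
    set m := sSup A with hm
    have hm1 : b2 ≤ m := le_csSup hAbdd hA2
    have hm2 : m ≤ b1 := csSup_le hAne (fun s hs => hs.1.2)
    have hmΘ : (a, m) ∈ Θ := hseg a b2 b1 h2 h1 m ⟨hm1, hm2⟩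
    obtain ⟨δ, hδ, hR, hL⟩ := loc m hmΘ
    have hmA : m ∈ A := by
      obtain ⟨s, hsA, hs⟩ := exists_lt_of_lt_csSup hAne (show m - δ < m by linarith)
      have hsm : s ≤ m := le_csSup hAbdd hsA
      rcases eq_or_lt_of_le hsm with he | hlt'
      · exact he ▸ hsA
      · have hsΘ : (a, s) ∈ Θ := hseg a b2 b1 h2 h1 s hsA.1
        exact ⟨⟨hm1, hm2⟩, le_trans (hL s hsΘ hs hlt') hsA.2⟩
    rcases eq_or_lt_of_le hm2 with he | hlt2
    · exact he ▸ hmA.2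
    · exfalso
      set s := min (m + δ / 2) b1 with hsdef
      have hs1 : m < s := lt_min (by linarith) hlt2
      have hs2 : s < m + δ := lt_of_le_of_lt (min_le_left _ _) (by linarith)
      have hsIcc : s ∈ Icc b2 b1 := ⟨by linarith, min_le_right _ _⟩
      have hsΘ : (a, s) ∈ Θ := hseg a b2 b1 h2 h1 s hsIcc
      have hsA : s ∈ A := ⟨hsIcc, le_trans (hR s hsΘ hs1 hs2) hmA.2⟩
      have := le_csSup hAbdd hsA
      linarith
  -- x constant on vertical segments
  have xvert : ∀ a b1 b2 : ℝ, (a, b1) ∈ Θ → (a, b2) ∈ Θ → x (a, b1) = x (a, b2) := by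
    have main : ∀ a b1 b2 : ℝ, (a, b1) ∈ Θ → (a, b2) ∈ Θ → b2 < b1 →
        x (a, b1) = x (a, b2) := by
      intro a b1 b2 h1 h2 hlt
      have hp := key a b2 b1 h2 h1 hlt.le
      have hIC1 := hIC (a, b1) h1 (a, b2) h2
      have hIC2 := hIC (a, b2) h2 (a, b1) h1
      have hb2 : 0 < b2 := hΘpos _ h2
      have hw0 : 0 < w a := hwpos a
      simp only at hIC1 hIC2
      apply le_antisymm
      · nlinarith
      · nlinarith
    intro a b1 b2 h1 h2
    rcases lt_trichotomy b2 b1 with h | h | h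
    · exact main a b1 b2 h1 h2 h
    · rw [h]
    · exact (main a b2 b1 h2 h1 h).symm
  -- local constancy of x
  have hloc : ∀ θ0 ∈ Θ, ∃ ε > 0, Metric.ball θ0 ε ⊆ Θ ∧
      ∀ θ ∈ Metric.ball θ0 ε, x θ = x θ0 := by
    intro θ0 hθ0
    obtain ⟨r, hr, hball⟩ := Metric.isOpen_iff.1 hΘopen θ0 hθ0
    have hcont : ContinuousAt η θ0 := hηdiff.continuous.continuousAt
    obtain ⟨δ, hδ, hδprop⟩ := Metric.continuousAt_iff.1 hcont (c * (r / 4)) (by positivity)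
    refine ⟨min δ (r / 4), lt_min hδ (by positivity), ?_, ?_⟩
    · intro z hz
      apply hball
      rw [Metric.mem_ball] at hz ⊢
      calc dist z θ0 < min δ (r / 4) := hz
        _ ≤ r / 4 := min_le_right _ _
        _ < r := by linarith
    · rintro ⟨a, b⟩ hθ
      have hθΘ : (a, b) ∈ Θ := by
        apply hball
        rw [Metric.mem_ball] at hθ ⊢
        calc dist ((a:ℝ), b) θ0 < min δ (r / 4) := hθ
          _ ≤ r / 4 := min_le_right _ _
          _ < r := by linarith
      have hdist : dist ((a:ℝ), b) θ0 < δ :=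
        lt_of_lt_of_le (Metric.mem_ball.1 hθ) (min_le_left _ _)
      have hηclose := hδprop hdist
      rw [Real.dist_eq, abs_lt] at hηclose
      -- find s with η (a, s) = η θ0
      have hdn : η (a, b - r / 4) ≤ η (a, b) - c * (r / 4) := by
        have := grow_aux (fun s => η (a, s)) (hgdiff a) c (fun s => hηβ a s)
          (show b - r / 4 ≤ b by linarith)
        linarith [this]
      have hup : η (a, b) + c * (r / 4) ≤ η (a, b + r / 4) := by
        have := grow_aux (fun s => η (a, s)) (hgdiff a) c (fun s => hηβ a s)
          (show b ≤ b + r / 4 by linarith)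
        simpa using this
      have hsub := intermediate_value_Icc (show b - r / 4 ≤ b + r / 4 by linarith)
        ((hgdiff a).continuous.continuousOn)
      obtain ⟨s, hs, hsv⟩ := hsub (show η θ0 ∈ Icc (η (a, b - r / 4)) (η (a, b + r / 4))
        from ⟨by linarith, by linarith⟩)
      -- (a, s) ∈ Θ
      have hdab : dist ((a:ℝ), b) θ0 < r / 4 :=
        lt_of_lt_of_le (Metric.mem_ball.1 hθ) (min_le_right _ _)
      rw [Prod.dist_eq, max_lt_iff] at hdab
      have hsΘ : (a, s) ∈ Θ := by
        apply hball
        rw [Metric.mem_ball, Prod.dist_eq, max_lt_iff]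
        refine ⟨lt_trans hdab.1 (by linarith), ?_⟩
        have h1 : dist s b ≤ r / 4 := by
          rw [Real.dist_eq, abs_le]
          constructor <;> [linarith [hs.1]; linarith [hs.2]]
        calc dist s θ0.2 ≤ dist s b + dist b θ0.2 := dist_triangle _ _ _
          _ ≤ r / 4 + r / 4 := add_le_add h1 hdab.2.le
          _ < r := by linarith
      have hx1 : x (a, s) = x θ0 := hEq (a, s) hsΘ θ0 hθ0 (by exact hsv)
      have hx2 : x (a, b) = x (a, s) := xvert a b s hθΘ hsΘ
      rw [hx2, hx1]
  -- conclude by connectedness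
  intro θ1 hθ1 θ2 hθ2
  by_contra hne
  set u : Set (ℝ × ℝ) := {θ | ∃ ε > 0, Metric.ball θ ε ⊆ Θ ∧
    (∀ θ' ∈ Metric.ball θ ε, x θ' = x θ) ∧ x θ = x θ1} with hu_def
  set v : Set (ℝ × ℝ) := {θ | ∃ ε > 0, Metric.ball θ ε ⊆ Θ ∧
    (∀ θ' ∈ Metric.ball θ ε, x θ' = x θ) ∧ x θ ≠ x θ1} with hv_def
  have hopen : ∀ (P : ℝ × ℝ → Prop), IsOpen {θ | ∃ ε > 0, Metric.ball θ ε ⊆ Θ ∧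
      (∀ θ' ∈ Metric.ball θ ε, x θ' = x θ) ∧ P θ} → True := fun _ _ => trivial
  have hu : IsOpen u := by
    rw [Metric.isOpen_iff]
    rintro θ ⟨ε, hε, hsub, hconst, hval⟩
    refine ⟨ε, hε, fun θ' hθ' => ?_⟩
    have hd : dist θ' θ < ε := Metric.mem_ball.1 hθ'
    refine ⟨ε - dist θ' θ, by linarith, ?_, ?_, ?_⟩
    · exact fun z hz => hsub (Metric.mem_ball.1 (Metric.ball_subset_ball' (by linarith) hz))
    · intro z hz
      have hzθ : z ∈ Metric.ball θ ε := Metric.ball_subset_ball' (by linarith) hz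
      rw [hconst z hzθ, hconst θ' hθ']
    · rw [hconst θ' hθ']; exact hval
  have hv : IsOpen v := by
    rw [Metric.isOpen_iff]
    rintro θ ⟨ε, hε, hsub, hconst, hval⟩
    refine ⟨ε, hε, fun θ' hθ' => ?_⟩
    have hd : dist θ' θ < ε := Metric.mem_ball.1 hθ'
    refine ⟨ε - dist θ' θ, by linarith, ?_, ?_, ?_⟩
    · exact fun z hz => hsub (Metric.mem_ball.1 (Metric.ball_subset_ball' (by linarith) hz))
    · intro z hz
      have hzθ : z ∈ Metric.ball θ ε := Metric.ball_subset_ball' (by linarith) hz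
      rw [hconst z hzθ, hconst θ' hθ']
    · rw [hconst θ' hθ']; exact hval
  have hcover : Θ ⊆ u ∪ v := by
    intro θ hθ
    obtain ⟨ε, hε, hsub, hconst⟩ := hloc θ hθ
    by_cases h : x θ = x θ1
    · exact Or.inl ⟨ε, hε, hsub, hconst, h⟩
    · exact Or.inr ⟨ε, hε, hsub, hconst, h⟩
  have hne1 : (Θ ∩ u).Nonempty := by
    obtain ⟨ε, hε, hsub, hconst⟩ := hloc θ1 hθ1
    exact ⟨θ1, hθ1, ε, hε, hsub, hconst, rfl⟩
  have hne2 : (Θ ∩ v).Nonempty := by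
    obtain ⟨ε, hε, hsub, hconst⟩ := hloc θ2 hθ2
    exact ⟨θ2, hθ2, ε, hε, hsub, hconst, fun h => hne h.symm⟩
  obtain ⟨z, _, hzu, hzv⟩ := hΘconv.isPreconnected u v hu hv hcover hne1 hne2
  obtain ⟨_, _, _, _, h1'⟩ := hzu
  obtain ⟨_, _, _, _, h2'⟩ := hzv
  exact h2' h1'
end

section
/- Suppose payments are not used (p ≡ 0) and a non-constant allocation rule x(α,β) = x̂(η(α,β)) is equitable and implementable, with x̂ continuous. Then there exists a merit level η* in the interior range of η and a constant k such that β/z(α) = k for all types (α,β) ∈ Θ with η(α,β) = η*. -/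
/-!
Incentive compatibility with ordeals alone makes the allocation weakly increasing in the rate
`β / z(α)`. Suppose every merit level contains two types with different rates. Moving slightly up
from the lower-rate type, or slightly down from the higher-rate one, along a vertical line reaches
every nearby merit level at a type whose rate lies strictly between the two; monotonicity and
equity then give every nearby level the allocation of the original one. So the allocation is
locally constant on `Θ`, hence constant on the connected set `Θ`.
-/

open Set Filter Topology

lemma le_of_incentiveCompatible_of_div_lt_div {β β' w w' x x' q q' : ℝ} (hw : 0 < w)
    (hw' : 0 < w') (hic : β * x - w * q ≥ β * x' - w * q')
    (hic' : β' * x' - w' * q' ≥ β' * x - w' * q) (h : β / w < β' / w') : x ≤ x' := by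
  rw [div_lt_div_iff₀ hw hw'] at h
  by_contra! hx
  nlinarith [mul_pos (sub_pos.2 h) (sub_pos.2 hx), mul_le_mul_of_nonneg_left hic hw'.le,
    mul_le_mul_of_nonneg_left hic' hw.le]

lemma IsPreconnected.apply_eq_of_eventually_eq {X Y : Type*} [TopologicalSpace X] {s : Set X}
    (hs : IsPreconnected s) {f : X → Y} (hf : ∀ a ∈ s, ∀ᶠ b in 𝓝 a, f b = f a) {a b : X}
    (ha : a ∈ s) (hb : b ∈ s) : f a = f b :=
  eq_of_germ_isConstant_on (fun c hc => ⟨f c, hf c hc⟩) hs ha hb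

section IntermediateValue

variable {α β : Type*} [ConditionallyCompleteLinearOrder α] [TopologicalSpace α]
  [OrderTopology α] [DenselyOrdered α] [LinearOrder β] [TopologicalSpace β] [OrderTopology β]
  {g : α → β} {P : α → Prop} {b : α}

lemma StrictMono.eventually_nhdsGT_exists_eq [NoMaxOrder α] (hg : StrictMono g)
    (hgc : Continuous g) (hP : ∀ᶠ t in 𝓝[>] b, P t) :
    ∀ᶠ y in 𝓝[>] g b, ∃ t, P t ∧ g t = y := by
  obtain ⟨u, hbu, hPu⟩ := mem_nhdsGT_iff_exists_Ioo_subset.1 hP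
  filter_upwards [Ioo_mem_nhdsGT (hg hbu)] with y hy
  obtain ⟨t, ht, rfl⟩ := intermediate_value_Ioo (le_of_lt hbu) hgc.continuousOn hy
  exact ⟨t, hPu ht, rfl⟩

lemma StrictMono.eventually_nhdsLT_exists_eq [NoMinOrder α] (hg : StrictMono g)
    (hgc : Continuous g) (hP : ∀ᶠ t in 𝓝[<] b, P t) :
    ∀ᶠ y in 𝓝[<] g b, ∃ t, P t ∧ g t = y := by
  obtain ⟨l, hlb, hPl⟩ := mem_nhdsLT_iff_exists_Ioo_subset.1 hP
  filter_upwards [Ioo_mem_nhdsLT (hg hlb)] with y hy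
  obtain ⟨t, ht, rfl⟩ := intermediate_value_Ioo (le_of_lt hlb) hgc.continuousOn hy
  exact ⟨t, hPl ht, rfl⟩

end IntermediateValue

lemma eventually_alloc_eq_of_exists_rate_between {α : Type*} {S : Set α} {η m x : α → ℝ}
    (hmono : ∀ θ ∈ S, ∀ θ' ∈ S, m θ < m θ' → x θ ≤ x θ')
    (hEq : ∀ θ ∈ S, ∀ θ' ∈ S, η θ = η θ' → x θ = x θ') {θlo θhi : α} (hlo : θlo ∈ S)
    (hhi : θhi ∈ S) (hlevel : η θlo = η θhi) {l : Filter ℝ}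
    (h : ∀ᶠ y in l, ∃ θ ∈ S, η θ = y ∧ m θlo < m θ ∧ m θ < m θhi) :
    ∀ᶠ y in l, ∀ θ ∈ S, η θ = y → x θ = x θlo := by
  filter_upwards [h]
  rintro _ ⟨θ', hθ', rfl, hlo_lt, hlt_hi⟩ θ hθ hθθ'
  have := hmono _ hlo _ hθ' hlo_lt
  have := hmono _ hθ' _ hhi hlt_hi
  have := hEq _ hlo _ hhi hlevel
  have := hEq _ hθ _ hθ' hθθ'
  linarith

section Types

variable {Θ : Set (ℝ × ℝ)} {z : ℝ → ℝ} {η x : ℝ × ℝ → ℝ}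

/-- The rate `β / z(α)` at which type `(α, β)` trades allocation against ordeal. -/
noncomputable def ordealRate (z : ℝ → ℝ) (θ : ℝ × ℝ) : ℝ := θ.2 / z θ.1

lemma eventually_mem_and_ordealRate_mem (hΘ : IsOpen Θ) {a b : ℝ} (hab : (a, b) ∈ Θ)
    {s : Set ℝ} (hs : s ∈ 𝓝 (ordealRate z (a, b))) :
    ∀ᶠ t in 𝓝 b, (a, t) ∈ Θ ∧ ordealRate z (a, t) ∈ s := by
  have hline : Continuous fun t : ℝ => (a, t) := continuous_const.prodMk continuous_id
  have hrate : Continuous fun t : ℝ => ordealRate z (a, t) := continuous_id.div_const (z a)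
  exact ((hline.tendsto b).eventually (hΘ.mem_nhds hab)).and
    ((hrate.tendsto b).eventually hs)

variable (hΘ : IsOpen Θ) (hz : ∀ a, 0 < z a) (hη : Continuous η)
  (hηβ : ∀ a, StrictMono fun b => η (a, b))
include hΘ hz hη hηβ

lemma eventually_nhdsGT_exists_ordealRate_between {θ₀ : ℝ × ℝ} (hθ₀ : θ₀ ∈ Θ) {r : ℝ}
    (hr : ordealRate z θ₀ < r) :
    ∀ᶠ y in 𝓝[>] η θ₀, ∃ θ ∈ Θ, η θ = y ∧ ordealRate z θ₀ < ordealRate z θ ∧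
      ordealRate z θ < r := by
  obtain ⟨a, b⟩ := θ₀
  have hnear := eventually_mem_and_ordealRate_mem hΘ hθ₀ (Iio_mem_nhds hr)
  have hup : ∀ᶠ t in 𝓝[>] b, ordealRate z (a, b) < ordealRate z (a, t) :=
    eventually_nhdsWithin_of_forall fun t ht => div_lt_div_of_pos_right ht (hz a)
  filter_upwards [(hηβ a).eventually_nhdsGT_exists_eq (hη.comp (continuous_const.prodMk
    continuous_id)) ((hnear.filter_mono nhdsWithin_le_nhds).and hup)]
  rintro _ ⟨t, ⟨⟨hmem, hlt⟩, hgt⟩, rfl⟩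
  exact ⟨(a, t), hmem, rfl, hgt, hlt⟩

lemma eventually_nhdsLT_exists_ordealRate_between {θ₀ : ℝ × ℝ} (hθ₀ : θ₀ ∈ Θ) {r : ℝ}
    (hr : r < ordealRate z θ₀) :
    ∀ᶠ y in 𝓝[<] η θ₀, ∃ θ ∈ Θ, η θ = y ∧ r < ordealRate z θ ∧
      ordealRate z θ < ordealRate z θ₀ := by
  obtain ⟨a, b⟩ := θ₀
  have hnear := eventually_mem_and_ordealRate_mem hΘ hθ₀ (Ioi_mem_nhds hr)
  have hdown : ∀ᶠ t in 𝓝[<] b, ordealRate z (a, t) < ordealRate z (a, b) :=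
    eventually_nhdsWithin_of_forall fun t ht => div_lt_div_of_pos_right ht (hz a)
  filter_upwards [(hηβ a).eventually_nhdsLT_exists_eq (hη.comp (continuous_const.prodMk
    continuous_id)) ((hnear.filter_mono nhdsWithin_le_nhds).and hdown)]
  rintro _ ⟨t, ⟨⟨hmem, hgt⟩, hlt⟩, rfl⟩
  exact ⟨(a, t), hmem, rfl, hgt, hlt⟩

variable (hmono : ∀ θ ∈ Θ, ∀ θ' ∈ Θ, ordealRate z θ < ordealRate z θ' → x θ ≤ x θ')
  (hEq : ∀ θ ∈ Θ, ∀ θ' ∈ Θ, η θ = η θ' → x θ = x θ')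
include hmono hEq

lemma eventually_nhds_level_alloc_eq_of_ordealRate_lt {θlo θhi : ℝ × ℝ} (hlo : θlo ∈ Θ)
    (hhi : θhi ∈ Θ) (hlevel : η θlo = η θhi) (hrate : ordealRate z θlo < ordealRate z θhi) :
    ∀ᶠ y in 𝓝 (η θlo), ∀ θ ∈ Θ, η θ = y → x θ = x θlo := by
  rw [← nhdsNE_sup_pure, ← nhdsLT_sup_nhdsGT, eventually_sup, eventually_sup, eventually_pure]
  refine ⟨⟨?_, ?_⟩, fun θ hθ hθlo => hEq θ hθ θlo hlo hθlo⟩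
  · rw [hlevel]
    exact eventually_alloc_eq_of_exists_rate_between hmono hEq hlo hhi hlevel
      (hlevel ▸ eventually_nhdsLT_exists_ordealRate_between hΘ hz hη hηβ hhi hrate)
  · exact eventually_alloc_eq_of_exists_rate_between hmono hEq hlo hhi hlevel
      (eventually_nhdsGT_exists_ordealRate_between hΘ hz hη hηβ hlo hrate)

lemma eventually_nhds_alloc_eq_of_ordealRate_ne {θ₀ θ₁ : ℝ × ℝ} (hθ₀ : θ₀ ∈ Θ) (hθ₁ : θ₁ ∈ Θ)
    (hlevel : η θ₀ = η θ₁) (hrate : ordealRate z θ₀ ≠ ordealRate z θ₁) :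
    ∀ᶠ θ in 𝓝 θ₀, x θ = x θ₀ := by
  have hlevels : ∀ᶠ y in 𝓝 (η θ₀), ∀ θ ∈ Θ, η θ = y → x θ = x θ₀ := by
    rcases hrate.lt_or_gt with hlt | hgt
    · exact eventually_nhds_level_alloc_eq_of_ordealRate_lt hΘ hz hη hηβ hmono hEq hθ₀ hθ₁
        hlevel hlt
    · rw [hlevel, ← hEq θ₁ hθ₁ θ₀ hθ₀ hlevel.symm]
      exact eventually_nhds_level_alloc_eq_of_ordealRate_lt hΘ hz hη hηβ hmono hEq hθ₁ hθ₀
        hlevel.symm hgt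
  filter_upwards [hΘ.mem_nhds hθ₀, hη.continuousAt.eventually hlevels] with θ hθ hθlevel
  exact hθlevel θ hθ rfl

end Types

theorem stmt3_general
    (Θ : Set (ℝ × ℝ)) (hΘopen : IsOpen Θ) (hΘconv : Convex ℝ Θ)
    (z : ℝ → ℝ)
    (hzpos : ∀ a, 0 < z a)
    (η : ℝ × ℝ → ℝ) (hηC2 : ContDiff ℝ 2 η)
    (c : ℝ) (hc : 0 < c)
    (hηβ : ∀ a b : ℝ, c ≤ deriv (fun b' => η (a, b')) b)
    (x : ℝ × ℝ → ℝ)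
    -- equity: equal merit implies equal allocation
    (hEq : ∀ θ1 ∈ Θ, ∀ θ2 ∈ Θ, η θ1 = η θ2 → x θ1 = x θ2)
    -- non-constant
    (hnc : ∃ θ1 ∈ Θ, ∃ θ2 ∈ Θ, x θ1 ≠ x θ2)
    -- implementability with ordeals only (p ≡ 0)
    (hImpl : ∃ q : ℝ × ℝ → ℝ, (∀ θ ∈ Θ, 0 ≤ q θ) ∧
      (∀ θ ∈ Θ, ∀ θ' ∈ Θ,
        θ.2 * x θ - z θ.1 * q θ ≥ θ.2 * x θ' - z θ.1 * q θ') ∧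
      (∀ θ ∈ Θ, 0 ≤ θ.2 * x θ - z θ.1 * q θ)) :
    ∃ ηstar : ℝ, (∃ θ0 ∈ Θ, η θ0 = ηstar) ∧
      ∃ k : ℝ, ∀ θ ∈ Θ, η θ = ηstar → θ.2 / z θ.1 = k := by
  obtain ⟨q, -, hIC, -⟩ := hImpl
  have hmono : ∀ θ ∈ Θ, ∀ θ' ∈ Θ, ordealRate z θ < ordealRate z θ' → x θ ≤ x θ' :=
    fun θ hθ θ' hθ' => le_of_incentiveCompatible_of_div_lt_div (hzpos _) (hzpos _)
      (hIC θ hθ θ' hθ') (hIC θ' hθ' θ hθ)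
  have hηβ_mono : ∀ a, StrictMono fun b => η (a, b) :=
    fun a => strictMono_of_deriv_pos fun b => hc.trans_le (hηβ a b)
  by_contra! hlevel
  obtain ⟨θ₁, hθ₁, θ₂, hθ₂, hne⟩ := hnc
  refine hne (hΘconv.isPreconnected.apply_eq_of_eventually_eq (fun θ₀ hθ₀ => ?_) hθ₁ hθ₂)
  obtain ⟨θ, hθ, hθlevel, hrate⟩ := hlevel (η θ₀) ⟨θ₀, hθ₀, rfl⟩ (ordealRate z θ₀)
  exact eventually_nhds_alloc_eq_of_ordealRate_ne hΘopen hzpos hηC2.continuous hηβ_mono hmono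
    hEq hθ₀ hθ hθlevel.symm (Ne.symm hrate)

/-- With ordeals only (`p ≡ 0`), a non-constant, equitable and implementable
allocation rule `x = x̂ ∘ η` with `x̂` continuous forces the existence of a merit level `η*`
attained on `Θ` and a constant `k` with `β / z(α) = k` on the whole iso-merit set of `η*`. -/
theorem stmt3
    (Θ : Set (ℝ × ℝ)) (hΘopen : IsOpen Θ) (hΘconv : Convex ℝ Θ)
    (hΘbdd : Bornology.IsBounded Θ) (hΘpos : ∀ θ ∈ Θ, 0 < θ.2)
    (z : ℝ → ℝ) (hzC2 : ContDiff ℝ 2 z)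
    (hzpos : ∀ a, 0 < z a) (hz' : ∀ a, deriv z a < 0)
    (η : ℝ × ℝ → ℝ) (hηC2 : ContDiff ℝ 2 η)
    (c : ℝ) (hc : 0 < c)
    (hηα : ∀ a b : ℝ, c ≤ deriv (fun a' => η (a', b)) a)
    (hηβ : ∀ a b : ℝ, c ≤ deriv (fun b' => η (a, b')) b)
    (x : ℝ × ℝ → ℝ) (xhat : ℝ → ℝ)
    (hxform : ∀ θ ∈ Θ, x θ = xhat (η θ))
    (hxhatcont : Continuous xhat)
    (hxrange : ∀ θ ∈ Θ, x θ ∈ Icc (0:ℝ) 1)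
    -- equity: equal merit implies equal allocation
    (hEq : ∀ θ1 ∈ Θ, ∀ θ2 ∈ Θ, η θ1 = η θ2 → x θ1 = x θ2)
    -- non-constant
    (hnc : ∃ θ1 ∈ Θ, ∃ θ2 ∈ Θ, x θ1 ≠ x θ2)
    -- implementability with ordeals only (p ≡ 0)
    (hImpl : ∃ q : ℝ × ℝ → ℝ, (∀ θ ∈ Θ, 0 ≤ q θ) ∧
      (∀ θ ∈ Θ, ∀ θ' ∈ Θ,
        θ.2 * x θ - z θ.1 * q θ ≥ θ.2 * x θ' - z θ.1 * q θ') ∧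
      (∀ θ ∈ Θ, 0 ≤ θ.2 * x θ - z θ.1 * q θ)) :
    ∃ ηstar : ℝ, (∃ θ0 ∈ Θ, η θ0 = ηstar) ∧
      ∃ k : ℝ, ∀ θ ∈ Θ, η θ = ηstar → θ.2 / z θ.1 = k :=
  stmt3_general Θ hΘopen hΘconv z hzpos η hηC2 c hc hηβ x hEq hnc hImpl
end

section
/- Let x̂: [a,b] → [0,1] be weakly increasing. Then x̂ can be represented as a mixture of threshold rules: there exists a probability measure μ on the set T of threshold rules (functions equal to 1 above some threshold η*, 0 below η*, and either 0 or 1 at η*) such that x̂(η) = ∫_T ĥ(η) dμ(ĥ) for all η ∈ [a,b]. -/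
open Set MeasureTheory

/-- A threshold rule on `[a,b]`: equal to `1` strictly above some threshold `η*`,
`0` strictly below it, and either `0` or `1` at `η*`. -/
def IsThresholdRule (a b : ℝ) (h : ℝ → ℝ) : Prop :=
  ∃ ηs ∈ Set.Icc a b,
    (∀ η ∈ Set.Icc a b, ηs < η → h η = 1) ∧
    (∀ η ∈ Set.Icc a b, η < ηs → h η = 0) ∧
    (h ηs = 0 ∨ h ηs = 1)

instance (a b : ℝ) : TopologicalSpace {h : ℝ → ℝ // IsThresholdRule a b h} :=
  inferInstance

noncomputable instance (a b : ℝ) :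
    MeasurableSpace {h : ℝ → ℝ // IsThresholdRule a b h} := borel _

/-- Any set of reals which extends to the right at each of its points
(contains `[t, p)` for some `p > t`) is Borel measurable. -/
lemma measurableSet_of_ico (A : Set ℝ)
    (h : ∀ t ∈ A, ∃ p, t < p ∧ Set.Ico t p ⊆ A) : MeasurableSet A := by
  classical
  choose! p hp hsub using h
  set A' : Set ℝ := ⋃ t ∈ A, Set.Ioo t (p t) with hA'
  have hA'open : IsOpen A' := isOpen_biUnion fun t _ => isOpen_Ioo
  have hA'sub : A' ⊆ A := by
    refine Set.iUnion₂_subset fun t ht => ?_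
    exact (Set.Ioo_subset_Ico_self).trans (hsub t ht)
  have key : ∀ t ∈ A \ A', ∃ r : ℚ, t < (r : ℝ) ∧ (r : ℝ) < p t := by
    intro t ht
    exact exists_rat_btwn (hp t ht.1)
  choose! q hq1 hq2 using key
  have hinj : Set.InjOn q (A \ A') := by
    intro t₁ h₁ t₂ h₂ hq
    by_contra hne
    rcases lt_or_gt_of_ne hne with hlt | hlt
    · have : t₂ ∈ A' := by
        refine Set.mem_biUnion h₁.1 ?_
        refine ⟨hlt, ?_⟩
        calc t₂ < (q t₂ : ℝ) := hq1 t₂ h₂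
          _ = (q t₁ : ℝ) := by rw [hq]
          _ < p t₁ := hq2 t₁ h₁
      exact h₂.2 this
    · have : t₁ ∈ A' := by
        refine Set.mem_biUnion h₂.1 ?_
        refine ⟨hlt, ?_⟩
        calc t₁ < (q t₁ : ℝ) := hq1 t₁ h₁
          _ = (q t₂ : ℝ) := by rw [hq]
          _ < p t₂ := hq2 t₂ h₂
      exact h₁.2 this
  have hcount : (A \ A').Countable :=
    Set.countable_of_injective_of_countable_image hinj (Set.to_countable _)
  have : A = A' ∪ (A \ A') := (Set.union_diff_cancel hA'sub).symm
  rw [this]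
  exact hA'open.measurableSet.union hcount.measurableSet

/-- Every weakly increasing `x̂ : [a,b] → [0,1]` is a mixture of
threshold rules under some probability measure. -/
theorem stmt4
    (a b : ℝ) (hab : a ≤ b) (xhat : ℝ → ℝ)
    (hmono : MonotoneOn xhat (Icc a b))
    (hrange : ∀ η ∈ Icc a b, xhat η ∈ Icc (0:ℝ) 1) :
    ∃ μ : Measure {h : ℝ → ℝ // IsThresholdRule a b h},
      IsProbabilityMeasure μ ∧
      ∀ η ∈ Icc a b, xhat η = ∫ h, (h : ℝ → ℝ) η ∂μ := by
  classical
  -- the clamped version of xhat, monotone on all of ℝ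
  set c : ℝ → ℝ := fun η => xhat (max a (min η b)) with hc
  have hclamp_mem : ∀ η : ℝ, max a (min η b) ∈ Icc a b := by
    intro η
    constructor
    · exact le_max_left _ _
    · exact max_le hab (min_le_right _ _)
  have hclamp_eq : ∀ η ∈ Icc a b, max a (min η b) = η := by
    intro η hη
    rw [min_eq_left hη.2, max_eq_right hη.1]
  have hceq : ∀ η ∈ Icc a b, c η = xhat η := by
    intro η hη; rw [hc]; simp only []; rw [hclamp_eq η hη]
  have hcmono : Monotone c := by
    intro η₁ η₂ hle
    exact hmono (hclamp_mem η₁) (hclamp_mem η₂)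
      (max_le_max le_rfl (min_le_min hle le_rfl))
  -- the threshold family
  set F : ℝ → ℝ → ℝ := fun t η => if t < c η then 1 else 0 with hF
  have hthresh : ∀ t : ℝ, IsThresholdRule a b (F t) := by
    intro t
    by_cases hS : ∃ η ∈ Icc a b, t < xhat η
    · set S : Set ℝ := {η ∈ Icc a b | t < xhat η} with hSdef
      have hSne : S.Nonempty := by
        obtain ⟨η, hη, hlt⟩ := hS; exact ⟨η, hη, hlt⟩
      have hSbdd : BddBelow S := ⟨a, fun x hx => hx.1.1⟩
      set ηs := sInf S with hηs
      have hηs_mem : ηs ∈ Icc a b := by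
        constructor
        · exact le_csInf hSne fun x hx => hx.1.1
        · obtain ⟨x, hx⟩ := hSne
          exact (csInf_le hSbdd hx).trans hx.1.2
      refine ⟨ηs, hηs_mem, ?_, ?_, ?_⟩
      · intro η hη hlt
        obtain ⟨s, hs, hslt⟩ := exists_lt_of_csInf_lt hSne hlt
        have : t < c η := by
          rw [hceq η hη]
          have h1 : xhat s ≤ xhat η := hmono hs.1 hη hslt.le
          exact lt_of_lt_of_le hs.2 h1
        simp only [hF, if_pos this]
      · intro η hη hlt
        have hne : η ∉ S := fun hmem => absurd (csInf_le hSbdd hmem) (not_le.mpr hlt)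
        have : ¬ t < c η := by
          rw [hceq η hη]
          exact fun hcon => hne ⟨hη, hcon⟩
        simp only [hF, if_neg this]
      · by_cases h : t < c ηs
        · right; simp only [hF, if_pos h]
        · left; simp only [hF, if_neg h]
    · refine ⟨b, ⟨hab, le_rfl⟩, ?_, ?_, ?_⟩
      · intro η hη hlt; exact absurd hη.2 (not_le.mpr hlt)
      · intro η hη _
        have : ¬ t < c η := by
          rw [hceq η hη]
          exact fun hcon => hS ⟨η, hη, hcon⟩
        simp only [hF, if_neg this]
      · by_cases h : t < c b
        · right; simp only [hF, if_pos h]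
        · left; simp only [hF, if_neg h]
  -- the map into threshold rules
  set f : ℝ → {h : ℝ → ℝ // IsThresholdRule a b h} := fun t => ⟨F t, hthresh t⟩ with hf
  -- measurability of f
  have hmeas : Measurable f := by
    apply measurable_generateFrom
    intro U hU
    obtain ⟨V, hVopen, hVeq⟩ := isOpen_induced_iff.mp hU
    have hpre : f ⁻¹' U = {t : ℝ | F t ∈ V} := by
      rw [← hVeq]; rfl
    rw [hpre]
    apply measurableSet_of_ico
    intro t₀ ht₀
    obtain ⟨I, u, hu, hsub⟩ := isOpen_pi_iff.mp hVopen (F t₀) ht₀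
    set J : Finset ℝ := I.filter (fun η => t₀ < c η) with hJ
    set P : Finset ℝ := insert (t₀ + 1) (J.image c) with hP
    have hPne : P.Nonempty := Finset.insert_nonempty _ _
    set p : ℝ := P.min' hPne with hp
    have hpgt : t₀ < p := by
      rw [hp, Finset.lt_min'_iff]
      intro y hy
      rw [hP] at hy
      rcases Finset.mem_insert.mp hy with h | h
      · rw [h]; linarith
      · obtain ⟨η, hη, rfl⟩ := Finset.mem_image.mp h
        exact (Finset.mem_filter.mp hη).2
    refine ⟨p, hpgt, ?_⟩
    intro t ht
    show F t ∈ V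
    apply hsub
    intro η hη
    have hη' : η ∈ I := hη
    by_cases hcase : t₀ < c η
    · have hmemJ : η ∈ J := Finset.mem_filter.mpr ⟨hη', hcase⟩
      have hple : p ≤ c η := by
        apply Finset.min'_le
        rw [hP]
        exact Finset.mem_insert_of_mem (Finset.mem_image_of_mem c hmemJ)
      have h1 : t < c η := lt_of_lt_of_le ht.2 hple
      have : F t η = F t₀ η := by
        simp only [hF, if_pos h1, if_pos hcase]
      rw [this]
      exact (hu η hη').2
    · have h0 : ¬ t < c η := fun hcon => hcase (lt_of_le_of_lt ht.1 hcon)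
      have : F t η = F t₀ η := by
        simp only [hF, if_neg h0, if_neg hcase]
      rw [this]
      exact (hu η hη').2
  -- the base measure: uniform on (0,1]
  set ν : Measure ℝ := volume.restrict (Ioc (0:ℝ) 1) with hν
  have hνprob : IsProbabilityMeasure ν := by
    constructor
    rw [hν, Measure.restrict_apply MeasurableSet.univ, Set.univ_inter,
      Real.volume_Ioc]
    norm_num
  haveI : BorelSpace {h : ℝ → ℝ // IsThresholdRule a b h} := ⟨rfl⟩
  refine ⟨Measure.map f ν, Measure.isProbabilityMeasure_map hmeas.aemeasurable, ?_⟩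
  intro η hη
  have heval : Continuous (fun h : {h : ℝ → ℝ // IsThresholdRule a b h} => (h : ℝ → ℝ) η) :=
    (continuous_apply η).comp continuous_subtype_val
  have hval : ∫ t, F t η ∂ν = xhat η := by
    have hint : ∀ t : ℝ, F t η = (Set.Iio (c η)).indicator (fun _ => (1:ℝ)) t := by
      intro t
      by_cases h : t < c η
      · simp only [hF, Set.indicator, Set.mem_Iio, if_pos h]
      · simp only [hF, Set.indicator, Set.mem_Iio, if_neg h]
    rw [integral_congr_ae (Filter.Eventually.of_forall hint)]
    rw [integral_indicator_const (1:ℝ) measurableSet_Iio]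
    rw [hν, Measure.real, Measure.restrict_apply measurableSet_Iio]
    have hx := hrange η hη
    have hIeq : Set.Iio (c η) ∩ Set.Ioc (0:ℝ) 1 = Set.Ioo 0 (xhat η) := by
      rw [hceq η hη]
      ext t
      simp only [Set.mem_inter_iff, Set.mem_Iio, Set.mem_Ioc, Set.mem_Ioo]
      constructor
      · rintro ⟨h1, h2, h3⟩; exact ⟨h2, h1⟩
      · rintro ⟨h1, h2⟩; exact ⟨h2, h1, le_trans h2.le hx.2⟩
    rw [hIeq, Real.volume_Ioo]
    simp only [sub_zero, smul_eq_mul, mul_one]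
    rw [ENNReal.toReal_ofReal hx.1]
  rw [integral_map hmeas.aemeasurable (heval.stronglyMeasurable.aestronglyMeasurable)]
  exact hval.symm
end

section
/- The set of weakly increasing functions from [a,b] to [0,1] is convex and compact in the product (pointwise convergence) topology, and its extreme points are exactly the threshold rules (functions taking value 1 strictly above some threshold, 0 strictly below it, and 0 or 1 at the threshold). -/
open Set

/-- A threshold rule on `Icc a b` (as a function on the subtype): value `1` strictly above
some threshold, `0` strictly below it, and `0` or `1` at the threshold. -/
def IsThresholdRuleOn (a b : ℝ) (f : Set.Icc a b → ℝ) : Prop :=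
  ∃ ts : Set.Icc a b,
    (∀ t : Set.Icc a b, ts < t → f t = 1) ∧
    (∀ t : Set.Icc a b, t < ts → f t = 0) ∧
    (f ts = 0 ∨ f ts = 1)

/-- The set of weakly increasing functions `[a,b] → [0,1]` is convex and
compact in the product topology, and its extreme points are exactly the threshold rules. -/
theorem stmt5 (a b : ℝ) (hab : a ≤ b) :
    let A : Set (Set.Icc a b → ℝ) :=
      {f | Monotone f ∧ ∀ t, f t ∈ Set.Icc (0:ℝ) 1}
    Convex ℝ A ∧ IsCompact A ∧
      Set.extremePoints ℝ A = {f ∈ A | IsThresholdRuleOn a b f} := by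
  intro A
  haveI : Fact (a ≤ b) := ⟨hab⟩
  have hconv : Convex ℝ A := by
    intro f hf g hg p q hp hq hpq
    refine ⟨?_, ?_⟩
    · intro s t hst
      have h1 := hf.1 hst
      have h2 := hg.1 hst
      simp only [Pi.add_apply, Pi.smul_apply, smul_eq_mul]
      nlinarith
    · intro t
      have := (convex_Icc (0:ℝ) 1) (hf.2 t) (hg.2 t) hp hq hpq
      simpa using this
  have hcomp : IsCompact A := by
    have hsub : A ⊆ Set.pi Set.univ (fun _ : Set.Icc a b => Set.Icc (0:ℝ) 1) := by
      intro f hf t _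
      exact hf.2 t
    have hclosed : IsClosed A := by
      have h1 : IsClosed {f : Set.Icc a b → ℝ | Monotone f} := by
        have : {f : Set.Icc a b → ℝ | Monotone f} =
            ⋂ (s : Set.Icc a b) (t : Set.Icc a b) (_ : s ≤ t), {f | f s ≤ f t} := by
          ext f
          simp only [Set.mem_setOf_eq, Set.mem_iInter]
          exact ⟨fun h s t hst => h hst, fun h s t hst => h s t hst⟩
        rw [this]
        refine isClosed_iInter fun s => isClosed_iInter fun t => isClosed_iInter fun _ => ?_
        exact isClosed_le (continuous_apply s) (continuous_apply t)
      have h2 : IsClosed {f : Set.Icc a b → ℝ | ∀ t, f t ∈ Set.Icc (0:ℝ) 1} := by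
        have : {f : Set.Icc a b → ℝ | ∀ t, f t ∈ Set.Icc (0:ℝ) 1} =
            ⋂ (t : Set.Icc a b), {f | f t ∈ Set.Icc (0:ℝ) 1} := by
          ext f; simp
        rw [this]
        exact isClosed_iInter fun t => (isClosed_Icc).preimage (continuous_apply t)
      exact h1.inter h2
    exact IsCompact.of_isClosed_subset
      (isCompact_univ_pi fun _ => isCompact_Icc) hclosed hsub
  -- characterization of extreme points as 0/1-valued members of A
  have hchar : ∀ f : Set.Icc a b → ℝ,
      f ∈ Set.extremePoints ℝ A ↔ f ∈ A ∧ ∀ t, f t = 0 ∨ f t = 1 := by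
    intro f
    constructor
    · rintro ⟨hfA, hext⟩
      refine ⟨hfA, fun t => ?_⟩
      set g₁ : Set.Icc a b → ℝ := fun s => f s ^ 2 with hg₁def
      set g₂ : Set.Icc a b → ℝ := fun s => 2 * f s - f s ^ 2 with hg₂def
      have hg₁A : g₁ ∈ A := by
        refine ⟨fun s u hsu => ?_, fun s => ?_⟩
        · have h := hfA.1 hsu
          have hs := hfA.2 s
          simp only [hg₁def]
          nlinarith [hs.1]
        · have hs := hfA.2 s
          simp only [hg₁def]
          constructor <;> nlinarith [hs.1, hs.2]
      have hg₂A : g₂ ∈ A := by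
        refine ⟨fun s u hsu => ?_, fun s => ?_⟩
        · have h := hfA.1 hsu
          have hs := hfA.2 s
          have hu := hfA.2 u
          simp only [hg₂def]
          nlinarith [hs.2, hu.2]
        · have hs := hfA.2 s
          simp only [hg₂def]
          constructor <;> nlinarith [hs.1, hs.2]
      have hseg : f ∈ openSegment ℝ g₁ g₂ := by
        refine ⟨1/2, 1/2, by norm_num, by norm_num, by norm_num, ?_⟩
        funext s
        simp only [Pi.add_apply, Pi.smul_apply, smul_eq_mul, hg₁def, hg₂def]
        ring
      have := hext hg₁A hg₂A hseg
      have hts : f t ^ 2 = f t := by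
        have := congrFun this t
        simpa [hg₁def] using this
      have : f t * (f t - 1) = 0 := by nlinarith
      rcases mul_eq_zero.1 this with h | h
      · exact Or.inl h
      · exact Or.inr (by linarith)
    · rintro ⟨hfA, hbin⟩
      refine ⟨hfA, fun g₁ hg₁ g₂ hg₂ hseg => ?_⟩
      obtain ⟨p, q, hp, hq, hpq, heq⟩ := hseg
      have key : ∀ t, g₁ t = f t ∧ g₂ t = f t := by
        intro t
        have ht : p * g₁ t + q * g₂ t = f t := by
          have := congrFun heq t
          simpa [smul_eq_mul] using this
        have h1 := (hg₁.2 t).1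
        have h2 := (hg₁.2 t).2
        have h3 := (hg₂.2 t).1
        have h4 := (hg₂.2 t).2
        rcases hbin t with h0 | h0 <;> rw [h0] at ht ⊢ <;>
          constructor <;> nlinarith
      funext t
      · exact (key t).1
  refine ⟨hconv, hcomp, ?_⟩
  ext f
  rw [hchar f]
  constructor
  · rintro ⟨hfA, hbin⟩
    refine ⟨hfA, ?_⟩
    classical
    set S : Set (Set.Icc a b) := {t | f t = 1} with hS
    refine ⟨sInf S, ?_, ?_, hbin (sInf S)⟩
    · intro t ht
      rcases hbin t with h0 | h1
      · exfalso
        have hlb : t ∈ lowerBounds S := by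
          intro s hs
          by_contra hst
          push_neg at hst
          have hmono := hfA.1 hst.le
          have hs1 : f s = 1 := hs
          rw [hs1, h0] at hmono
          linarith
        exact absurd (le_sInf hlb) (not_le.2 ht)
      · exact h1
    · intro t ht
      rcases hbin t with h0 | h1
      · exact h0
      · exact absurd (sInf_le (show t ∈ S from h1)) (not_le.2 ht)
  · rintro ⟨hfA, ts, h1, h0, hts⟩
    refine ⟨hfA, fun t => ?_⟩
    rcases lt_trichotomy t ts with h | h | h
    · exact Or.inl (h0 t h)
    · rw [h]; exact hts
    · exact Or.inr (h1 t h)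
end

section
/- Let V: D → ℝ be continuous on a convex set D ⊂ ℝⁿ, differentiable almost everywhere along every line segment, with absolutely continuous restrictions to segments, and suppose that wherever the gradient ∇V exists, it satisfies cyclic monotonicity in the two-point sense: (∇V(z₂) − ∇V(z₁))·(z₂ − z₁) ≥ 0 for all z₁, z₂ where the gradient exists. Then for any z₂ ∈ D and any z₁ where ∇V(z₁) exists, V(z₂) ≥ V(z₁) + ∇V(z₁)·(z₂ − z₁); that is, ∇V(z₁) is a subgradient of V at z₁, and consequently V is convex. -/
open Set MeasureTheory

/-- A full-measure property on `(0,1)` holds somewhere in any subinterval. -/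
private lemma stmt8_dense {P : ℝ → Prop}
    (hae : ∀ᵐ t ∂(volume : Measure ℝ), t ∈ Ioo (0:ℝ) 1 → P t)
    {a b : ℝ} (ha : 0 ≤ a) (hb : b ≤ 1) (hab : a < b) :
    ∃ s, a < s ∧ s < b ∧ s ∈ Ioo (0:ℝ) 1 ∧ P s := by
  by_contra hcon
  push_neg at hcon
  have hsub : Ioo a b ⊆ {t | ¬ (t ∈ Ioo (0:ℝ) 1 → P t)} := by
    intro t ht
    have ht01 : t ∈ Ioo (0:ℝ) 1 := ⟨lt_of_le_of_lt ha ht.1, lt_of_lt_of_le ht.2 hb⟩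
    intro h
    exact hcon t ht.1 ht.2 ht01 (h ht01)
  have h0 : volume (Ioo a b) = 0 := measure_mono_null hsub (ae_iff.mp hae)
  rw [Real.volume_Ioo] at h0
  have : b - a ≤ 0 := by
    by_contra h
    push_neg at h
    exact (ENNReal.ofReal_pos.mpr h).ne' h0
  linarith

private lemma stmt8_key (n : ℕ)
    (D : Set (EuclideanSpace ℝ (Fin n))) (hD : Convex ℝ D)
    (V : EuclideanSpace ℝ (Fin n) → ℝ) (hVcont : ContinuousOn V D)
    (hdiff : ∀ z1 ∈ D, ∀ z2 ∈ D,
      ∀ᵐ t ∂(volume : Measure ℝ), t ∈ Ioo (0:ℝ) 1 →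
        DifferentiableAt ℝ V (z1 + t • (z2 - z1)))
    (hAC : ∀ z1 ∈ D, ∀ z2 ∈ D,
      V z2 = V z1 + ∫ t in (0:ℝ)..1, fderiv ℝ V (z1 + t • (z2 - z1)) (z2 - z1))
    (hmono : ∀ z1 ∈ D, ∀ z2 ∈ D, DifferentiableAt ℝ V z1 → DifferentiableAt ℝ V z2 →
      0 ≤ (fderiv ℝ V z2 - fderiv ℝ V z1) (z2 - z1)) :
    ∀ z1 ∈ D, ∀ z2 ∈ D, DifferentiableAt ℝ V z1 →
      V z1 + fderiv ℝ V z1 (z2 - z1) ≤ V z2 := by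
  intro z1 hz1 z2 hz2 hd1
  set v : EuclideanSpace ℝ (Fin n) := z2 - z1 with hv
  set γ : ℝ → EuclideanSpace ℝ (Fin n) := fun u => z1 + u • v with hγ
  set f : ℝ → ℝ := fun u => fderiv ℝ V (γ u) v with hfdef
  set c : ℝ := fderiv ℝ V z1 v with hcdef
  have hmem : ∀ u, 0 ≤ u → u ≤ 1 → γ u ∈ D := by
    intro u h0 h1
    have h := hD hz1 hz2 (by linarith : (0:ℝ) ≤ 1 - u) h0 (by ring)
    convert h using 1
    simp only [γ, v]
    module
  -- main estimate at differentiability points of the segment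
  have hkey : ∀ s ∈ Ioo (0:ℝ) 1, DifferentiableAt ℝ V (γ s) → V z1 + s * c ≤ V (γ s) := by
    intro s hs hds
    have hsmem : γ s ∈ D := hmem s hs.1.le hs.2.le
    have hftc := hAC z1 hz1 (γ s) hsmem
    have h1 : ∀ r : ℝ, fderiv ℝ V (z1 + r • (γ s - z1)) (γ s - z1) = s * f (s * r) := by
      intro r
      have e1 : γ s - z1 = s • v := by simp [γ]
      have e2 : z1 + r • (γ s - z1) = γ (s * r) := by
        rw [e1]; simp only [γ]; module
      rw [e2, e1, ContinuousLinearMap.map_smul]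
      simp [f, smul_eq_mul]
    have h2 : V (γ s) = V z1 + ∫ u in (0:ℝ)..s, f u := by
      rw [hftc]
      congr 1
      rw [intervalIntegral.integral_congr (g := fun r => s * f (s * r)) (fun r _ => h1 r)]
      rw [intervalIntegral.integral_const_mul]
      simpa using intervalIntegral.smul_integral_comp_mul_left f s (a := 0) (b := 1)
    -- measurability
    have hγcont : Continuous γ := by fun_prop
    have hfm : Measurable f :=
      (measurable_fderiv_apply_const ℝ V v).comp hγcont.measurable
    -- a.e. bounds on (0, s]
    have haes : ∀ᵐ u ∂(volume.restrict (Ioc (0:ℝ) s)), c ≤ f u ∧ f u ≤ f s := by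
      have hae1 : ∀ᵐ u ∂(volume : Measure ℝ), u ∈ Ioo (0:ℝ) 1 →
          DifferentiableAt ℝ V (γ u) := hdiff z1 hz1 z2 hz2
      have hne : ∀ᵐ u ∂(volume : Measure ℝ), u ≠ s := by
        refine ae_iff.2 ?_
        simpa [not_ne_iff, Set.setOf_eq_eq_singleton] using measure_singleton s
      filter_upwards [ae_restrict_of_ae hae1, ae_restrict_of_ae hne,
        ae_restrict_mem measurableSet_Ioc] with u hu1 hu2 hu3
      have hu01 : u ∈ Ioo (0:ℝ) 1 := ⟨hu3.1, lt_of_lt_of_le (lt_of_le_of_ne hu3.2 hu2) hs.2.le⟩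
      have hus : u < s := lt_of_le_of_ne hu3.2 hu2
      have hdu : DifferentiableAt ℝ V (γ u) := hu1 hu01
      have humem : γ u ∈ D := hmem u hu01.1.le hu01.2.le
      constructor
      · have hmn := hmono z1 hz1 (γ u) humem hd1 hdu
        have e : γ u - z1 = u • v := by simp [γ]
        rw [e, ContinuousLinearMap.map_smul] at hmn
        simp only [ContinuousLinearMap.sub_apply, smul_eq_mul] at hmn
        nlinarith [hu01.1]
      · have hmn := hmono (γ u) humem (γ s) hsmem hdu hds
        have e : γ s - γ u = (s - u) • v := by simp only [γ]; module
        rw [e, ContinuousLinearMap.map_smul] at hmn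
        simp only [ContinuousLinearMap.sub_apply, smul_eq_mul] at hmn
        nlinarith [hus]
    -- integrability of f on [0, s]
    have hint : IntervalIntegrable f volume 0 s := by
      rw [intervalIntegrable_iff_integrableOn_Ioc_of_le hs.1.le]
      have hg : IntegrableOn (fun _ : ℝ => max |c| |f s|) (Ioc 0 s) volume :=
        integrableOn_const measure_Ioc_lt_top.ne
      refine hg.mono' (hfm.aestronglyMeasurable.restrict) ?_
      filter_upwards [haes] with u hu
      rw [Real.norm_eq_abs, abs_le]
      constructor
      · have := neg_abs_le c
        have h' := le_max_left |c| |f s|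
        linarith [hu.1]
      · exact hu.2.trans ((le_abs_self _).trans (le_max_right _ _))
    have hcint : IntervalIntegrable (fun _ : ℝ => c) volume 0 s := intervalIntegrable_const
    have hlb : (∫ _ in (0:ℝ)..s, c) ≤ ∫ u in (0:ℝ)..s, f u := by
      apply intervalIntegral.integral_mono_ae_restrict hs.1.le hcint hint
      have haes' : ∀ᵐ u ∂(volume : Measure ℝ), u ∈ Ioc (0:ℝ) s → c ≤ f u :=
        (ae_restrict_iff' measurableSet_Ioc).mp
          (haes.mono (fun u hu => hu.1))
      refine (ae_restrict_iff' measurableSet_Icc).mpr ?_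
      filter_upwards [haes'] with u hu
      intro humem
      rcases eq_or_lt_of_le humem.1 with h0 | h0
      · have : γ u = z1 := by simp [γ, ← h0]
        simp only [f, this]
        exact le_of_eq rfl
      · exact hu ⟨h0, humem.2⟩
    rw [intervalIntegral.integral_const, smul_eq_mul, sub_zero] at hlb
    rw [h2]
    linarith
  -- pass to the limit s → 1⁻ using continuity of V at z2
  refine le_of_forall_pos_le_add ?_
  intro ε hε
  obtain ⟨δ, hδ, hδ2⟩ := Metric.continuousWithinAt_iff.mp (hVcont z2 hz2) (ε/2) (by linarith)
  set η : ℝ := min (δ / (‖v‖ + 1)) (min ((ε/2) / (|c| + 1)) 1) with hηdef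
  have hηpos : 0 < η := by
    refine lt_min (by positivity) (lt_min (by positivity) one_pos)
  have hη1 : η ≤ 1 := (min_le_right _ _).trans (min_le_right _ _)
  have hηδ : η ≤ δ / (‖v‖ + 1) := min_le_left _ _
  have hηε : η ≤ (ε/2) / (|c| + 1) := (min_le_right _ _).trans (min_le_left _ _)
  obtain ⟨s, hsa, hsb, hs01, hds⟩ :=
    stmt8_dense (hdiff z1 hz1 z2 hz2) (by linarith : (0:ℝ) ≤ 1 - η) le_rfl (by linarith)
  have hVs := hkey s hs01 hds
  have hclose : dist (γ s) z2 < δ := by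
    have e : γ s - z2 = (s - 1) • v := by simp only [γ, v]; module
    rw [dist_eq_norm, e, norm_smul, Real.norm_eq_abs, abs_of_nonpos (by linarith : s - 1 ≤ 0)]
    have h1 : 1 - s < η := by linarith
    have h2 : (1 - s) * ‖v‖ < η * (‖v‖ + 1) := by
      nlinarith [norm_nonneg v]
    have h3 : η * (‖v‖ + 1) ≤ δ :=
      (le_div_iff₀ (by positivity : (0:ℝ) < ‖v‖ + 1)).mp hηδ
    linarith
  have hVclose := hδ2 (hmem s hs01.1.le hs01.2.le) hclose
  rw [Real.dist_eq, abs_lt] at hVclose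
  have hsc : c - s * c ≤ ε / 2 := by
    have h1 : (1 - s) * c ≤ (1 - s) * |c| :=
      mul_le_mul_of_nonneg_left (le_abs_self c) (by linarith [hs01.2] : (0:ℝ) ≤ 1 - s)
    have h2 : (1 - s) * |c| ≤ η * |c| :=
      mul_le_mul_of_nonneg_right (by linarith) (abs_nonneg c)
    have h3 : η * |c| ≤ (ε/2) / (|c| + 1) * |c| :=
      mul_le_mul_of_nonneg_right hηε (abs_nonneg c)
    have h4 : (ε/2) / (|c| + 1) * |c| ≤ ε/2 := by
      rw [div_mul_eq_mul_div, div_le_iff₀ (by positivity : (0:ℝ) < |c| + 1)]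
      nlinarith [abs_nonneg c]
    linarith [h1, h2, h3, h4]
  linarith [hVclose.2, hVs, hsc]

set_option maxHeartbeats 1000000 in
/-- If a continuous `V` on a convex set `D ⊆ ℝⁿ` is a.e. differentiable along
segments, absolutely continuous along segments (encoded by the fundamental theorem of
calculus identity), and its gradient (where it exists) is two-point monotone, then the
gradient at any point of differentiability is a subgradient, and `V` is convex on `D`. -/
theorem stmt8 (n : ℕ)
    (D : Set (EuclideanSpace ℝ (Fin n))) (hD : Convex ℝ D)
    (V : EuclideanSpace ℝ (Fin n) → ℝ) (hVcont : ContinuousOn V D)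
    -- a.e. differentiability along every segment
    (hdiff : ∀ z1 ∈ D, ∀ z2 ∈ D,
      ∀ᵐ t ∂(volume : Measure ℝ), t ∈ Ioo (0:ℝ) 1 →
        DifferentiableAt ℝ V (z1 + t • (z2 - z1)))
    -- absolute continuity along segments (FTC identity)
    (hAC : ∀ z1 ∈ D, ∀ z2 ∈ D,
      V z2 = V z1 + ∫ t in (0:ℝ)..1, fderiv ℝ V (z1 + t • (z2 - z1)) (z2 - z1))
    -- two-point monotonicity of the gradient where it exists
    (hmono : ∀ z1 ∈ D, ∀ z2 ∈ D, DifferentiableAt ℝ V z1 → DifferentiableAt ℝ V z2 →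
      0 ≤ (fderiv ℝ V z2 - fderiv ℝ V z1) (z2 - z1)) :
    (∀ z1 ∈ D, ∀ z2 ∈ D, DifferentiableAt ℝ V z1 →
      V z2 ≥ V z1 + fderiv ℝ V z1 (z2 - z1)) ∧ ConvexOn ℝ D V := by
  have key := stmt8_key n D hD V hVcont hdiff hAC hmono
  refine ⟨fun z1 hz1 z2 hz2 hd1 => ge_iff_le.mpr (key z1 hz1 z2 hz2 hd1), hD, ?_⟩
  intro x hx y hy a b ha hb hab
  set w : EuclideanSpace ℝ (Fin n) := y - x with hw
  set γ : ℝ → EuclideanSpace ℝ (Fin n) := fun u => x + u • w with hγ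
  have hmem : ∀ u, 0 ≤ u → u ≤ 1 → γ u ∈ D := by
    intro u h0 h1
    have h := hD hx hy (by linarith : (0:ℝ) ≤ 1 - u) h0 (by ring)
    convert h using 1
    simp only [γ, w]
    module
  have hgoal : a • x + b • y = γ b := by
    have ha' : a = 1 - b := by linarith
    simp only [γ, w, ha']
    module
  have hb1 : b ≤ 1 := by linarith
  rw [hgoal, smul_eq_mul, smul_eq_mul]
  -- the bound at points of differentiability along the segment
  have hS : ∀ s, s ∈ Ioo (0:ℝ) 1 → DifferentiableAt ℝ V (γ s) →
      V (γ s) ≤ (1 - s) * V x + s * V y := by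
    intro s hs hds
    have hsD : γ s ∈ D := hmem s hs.1.le hs.2.le
    have h1 := key (γ s) hsD x hx hds
    have h2 := key (γ s) hsD y hy hds
    have e : (1 - s) • (x - γ s) + s • (y - γ s) = (0 : EuclideanSpace ℝ (Fin n)) := by
      simp only [γ, w]
      module
    have e2 : (1 - s) * (fderiv ℝ V (γ s) (x - γ s)) + s * (fderiv ℝ V (γ s) (y - γ s)) = 0 := by
      have h3 := congrArg (fderiv ℝ V (γ s)) e
      rw [map_add, ContinuousLinearMap.map_smul, ContinuousLinearMap.map_smul, map_zero] at h3
      simpa [smul_eq_mul] using h3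
    have h4 := mul_le_mul_of_nonneg_left h1 (by linarith [hs.2] : (0:ℝ) ≤ 1 - s)
    have h5 := mul_le_mul_of_nonneg_left h2 hs.1.le
    nlinarith [h4, h5, e2]
  rcases eq_or_lt_of_le hb with hb0 | hbpos
  · have ha1 : a = 1 := by linarith
    have e : γ 0 = x := by simp [γ]
    rw [← hb0, e, ha1]
    simp
  rcases eq_or_lt_of_le hb1 with hb1' | hblt
  · have ha0 : a = 0 := by linarith
    have e : γ 1 = y := by simp only [γ, w]; module
    rw [hb1', e, ha0]
    simp
  -- limit argument at b ∈ (0,1)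
  refine le_of_forall_pos_le_add ?_
  intro ε hε
  have hbD : γ b ∈ D := hmem b hb hb1
  obtain ⟨δ, hδ, hδ2⟩ := Metric.continuousWithinAt_iff.mp (hVcont (γ b) hbD) (ε/2) (by linarith)
  set η : ℝ := min (δ / (‖w‖ + 1)) ((ε/2) / (|V x| + |V y| + 1)) with hηdef
  have hηpos : 0 < η := lt_min (by positivity) (by positivity)
  set lo : ℝ := max (b - η) (b/2) with hlodef
  set hi : ℝ := min (b + η) ((b+1)/2) with hhidef
  have hlo0 : 0 ≤ lo := le_trans (by linarith) (le_max_right _ _)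
  have hhi1 : hi ≤ 1 := le_trans (min_le_right _ _) (by linarith)
  have hlob : lo < b := max_lt (by linarith) (by linarith)
  have hbhi : b < hi := lt_min (by linarith) (by linarith)
  obtain ⟨s, hsa, hsb, hs01, hds⟩ :=
    stmt8_dense (hdiff x hx y hy) hlo0 hhi1 (lt_trans hlob hbhi)
  have habs : |s - b| < η := by
    have e1 : b - η ≤ lo := le_max_left _ _
    have e2 : hi ≤ b + η := min_le_left _ _
    rw [abs_sub_lt_iff]
    constructor <;> linarith
  have hsV := hS s hs01 hds
  have hclose : dist (γ s) (γ b) < δ := by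
    have e : γ s - γ b = (s - b) • w := by simp only [γ]; module
    rw [dist_eq_norm, e, norm_smul, Real.norm_eq_abs]
    have h3 : η * (‖w‖ + 1) ≤ δ :=
      (le_div_iff₀ (by positivity : (0:ℝ) < ‖w‖ + 1)).mp (min_le_left _ _)
    nlinarith [norm_nonneg w, abs_nonneg (s - b)]
  have hVclose := hδ2 (hmem s hs01.1.le hs01.2.le) hclose
  rw [Real.dist_eq, abs_lt] at hVclose
  have hlin : (1 - s) * V x + s * V y ≤ (1 - b) * V x + b * V y + ε/2 := by
    have h1 : (s - b) * (V y - V x) ≤ |s - b| * (|V y| + |V x|) := by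
      calc (s - b) * (V y - V x) ≤ |(s - b) * (V y - V x)| := le_abs_self _
        _ = |s - b| * |V y - V x| := abs_mul _ _
        _ ≤ |s - b| * (|V y| + |V x|) :=
            mul_le_mul_of_nonneg_left (abs_sub _ _) (abs_nonneg _)
    have h2 : |s - b| * (|V y| + |V x|) ≤ η * (|V x| + |V y| + 1) := by
      have h2a : |s - b| * (|V y| + |V x|) ≤ η * (|V y| + |V x|) :=
        mul_le_mul_of_nonneg_right habs.le (by positivity)
      nlinarith [hηpos.le]
    have h3 : η * (|V x| + |V y| + 1) ≤ ε/2 :=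
      (le_div_iff₀ (by positivity : (0:ℝ) < |V x| + |V y| + 1)).mp (min_le_right _ _)
    linarith
  have ha' : a = 1 - b := by linarith
  rw [ha']
  linarith [hVclose.1, hsV, hlin]
end

section
/- Suppose α ≥ α' and β ≥ β' with at least one inequality strict, ordeals only are used (p ≡ 0), and the mechanism (x, 0, q) is incentive compatible for the utility U[α,β;x,q] = v(β,x) − z(α,q), where v has strictly increasing differences in (β,x), z has strictly decreasing differences in (α,q), and v_x, z_q > 0. Then x(α,β) ≥ x(α',β'). -/
open Set

/-!
Suppose type `(α, β)` received less than `(α', β')`, say `x₁ < x₂`. Preferring its own bundle,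
`(α, β)` must face a strictly smaller ordeal, `q₁ < q₂`. Adding the two incentive constraints gives
`v β x₂ - v β x₁ ≤ z α q₂ - z α q₁ ≤ z α' q₂ - z α' q₁ ≤ v β' x₂ - v β' x₁ ≤ v β x₂ - v β x₁`,
where the second and fourth steps are the single-crossing conditions; since `α' < α` or `β' < β`,
one of them is strict, a contradiction.
-/

section Differences

variable {ι κ γ : Type*} [PartialOrder ι] [Preorder κ] [Sub γ] [Preorder γ]

def StrictIncreasingDifferences (f : ι → κ → γ) : Prop :=
  ∀ b₂ b₁ x₂ x₁, b₂ < b₁ → x₂ < x₁ → f b₂ x₁ - f b₂ x₂ < f b₁ x₁ - f b₁ x₂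

theorem StrictIncreasingDifferences.sub_le_sub {f : ι → κ → γ}
    (hf : StrictIncreasingDifferences f) {b₂ b₁ : ι} {x₂ x₁ : κ} (hb : b₂ ≤ b₁) (hx : x₂ < x₁) :
    f b₂ x₁ - f b₂ x₂ ≤ f b₁ x₁ - f b₁ x₂ := by
  rcases hb.lt_or_eq with hb | rfl
  · exact (hf b₂ b₁ x₂ x₁ hb hx).le
  · exact le_rfl

end Differences

theorem lt_of_sub_ge_sub_of_lt {κ μ G : Type*} [Preorder κ] [LinearOrder μ] [AddCommGroup G]
    [LinearOrder G] [IsOrderedAddMonoid G] {a : κ → G} {c : μ → G} (ha : StrictMono a)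
    (hc : StrictMono c) {x₁ x₂ : κ} {q₁ q₂ : μ} (h : a x₁ - c q₁ ≥ a x₂ - c q₂) (hx : x₁ < x₂) :
    q₁ < q₂ := by
  rw [ge_iff_le, sub_le_sub_iff] at h
  exact hc.lt_iff_lt.mp (lt_of_add_lt_add_left (h.trans_lt' (add_lt_add_left (ha hx) _)))

theorem stmt9_general
    (Θ : Set (ℝ × ℝ))
    (v z : ℝ → ℝ → ℝ)
    (hvx : ∀ β x : ℝ, 0 < deriv (v β) x)
    (hzq : ∀ α q : ℝ, 0 < deriv (z α) q)
    -- strictly increasing differences of v in (β,x)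
    (hvid : ∀ β₂ β₁ x₂ x₁ : ℝ, β₂ < β₁ → x₂ < x₁ →
      v β₂ x₁ - v β₂ x₂ < v β₁ x₁ - v β₁ x₂)
    -- strictly decreasing differences of z in (α,q)
    (hzdd : ∀ α₂ α₁ q₂ q₁ : ℝ, α₂ < α₁ → q₂ < q₁ →
      z α₁ q₁ - z α₁ q₂ < z α₂ q₁ - z α₂ q₂)
    (x q : ℝ × ℝ → ℝ)
    -- IC with p ≡ 0
    (hIC : ∀ θ ∈ Θ, ∀ θ' ∈ Θ,
      v θ.2 (x θ) - z θ.1 (q θ) ≥ v θ.2 (x θ') - z θ.1 (q θ'))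
    (α α' β β' : ℝ) (hmem : (α, β) ∈ Θ) (hmem' : (α', β') ∈ Θ)
    (hα : α' ≤ α) (hβ : β' ≤ β) (hstrict : α' < α ∨ β' < β) :
    x (α', β') ≤ x (α, β) := by
  by_contra! hx
  have hIC₁ := hIC _ hmem _ hmem'
  have hIC₂ := hIC _ hmem' _ hmem
  dsimp only at hIC₁ hIC₂
  have hq : q (α, β) < q (α', β') :=
    lt_of_sub_ge_sub_of_lt (strictMono_of_deriv_pos (hvx β))
      (strictMono_of_deriv_pos (hzq α)) hIC₁ hx
  have hzdd' : StrictIncreasingDifferences fun a b => -z a b := fun a₂ a₁ b₂ b₁ ha hb => by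
    linarith [hzdd a₂ a₁ b₂ b₁ ha hb]
  have hv := StrictIncreasingDifferences.sub_le_sub hvid hβ hx
  have hz := hzdd'.sub_le_sub hα hq
  rcases hstrict with hα | hβ
  · linarith [hzdd α' α _ _ hα hq]
  · linarith [hvid β' β _ _ hβ hx]

/-- Monotonicity: with ordeals only, under an IC mechanism for utility
`v(β,x) − z(α,q)` with single-crossing, the allocation is componentwise monotone. -/
theorem stmt9
    (Θ : Set (ℝ × ℝ))
    (v z : ℝ → ℝ → ℝ)
    (hvC2 : ContDiff ℝ 2 (Function.uncurry v)) (hzC2 : ContDiff ℝ 2 (Function.uncurry z))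
    (hvx : ∀ β x : ℝ, 0 < deriv (v β) x)
    (hzq : ∀ α q : ℝ, 0 < deriv (z α) q)
    -- strictly increasing differences of v in (β,x)
    (hvid : ∀ β₂ β₁ x₂ x₁ : ℝ, β₂ < β₁ → x₂ < x₁ →
      v β₂ x₁ - v β₂ x₂ < v β₁ x₁ - v β₁ x₂)
    -- strictly decreasing differences of z in (α,q)
    (hzdd : ∀ α₂ α₁ q₂ q₁ : ℝ, α₂ < α₁ → q₂ < q₁ →
      z α₁ q₁ - z α₁ q₂ < z α₂ q₁ - z α₂ q₂)
    (hv0 : ∀ β, v β 0 = 0) (hz0 : ∀ α, z α 0 = 0)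
    (x q : ℝ × ℝ → ℝ)
    (hxrange : ∀ θ ∈ Θ, x θ ∈ Icc (0:ℝ) 1)
    (hqpos : ∀ θ ∈ Θ, 0 ≤ q θ)
    -- IC with p ≡ 0
    (hIC : ∀ θ ∈ Θ, ∀ θ' ∈ Θ,
      v θ.2 (x θ) - z θ.1 (q θ) ≥ v θ.2 (x θ') - z θ.1 (q θ'))
    (α α' β β' : ℝ) (hmem : (α, β) ∈ Θ) (hmem' : (α', β') ∈ Θ)
    (hα : α' ≤ α) (hβ : β' ≤ β) (hstrict : α' < α ∨ β' < β) :
    x (α', β') ≤ x (α, β) :=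
  stmt9_general Θ v z hvx hzq hvid hzdd x q hIC α α' β β' hmem hmem' hα hβ hstrict
end

section
/- (Generalized first-order condition) Suppose p ≡ 0 and (x,0,q) is IC for utility v(β,x) − z(α,q). Fix a type (α^a,β^a) and suppose there is a decreasing sequence δ_i → 0 such that the diagonal allocations x(α^a+δ_i, β^a+δ_i) are strictly decreasing and converge to x(α^a,β^a). Then for any type (α^b,β^b) with x(α^b,β^b) = x(α^a,β^a), we have v_x(β^b, x^a)/z_q(α^b, q^a) ≤ v_x(β^a, x^a)/z_q(α^a, q^a), where x^a = x(α^a,β^a) and q^a = q(α^a,β^a). -/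
open Set Filter

/-- Partial derivative in the second variable, as a `HasDerivAt`. -/
lemma aux_hasDerivAt {f : ℝ → ℝ → ℝ} (hf : ContDiff ℝ 2 (Function.uncurry f)) (a t : ℝ) :
    HasDerivAt (f a) (fderiv ℝ (Function.uncurry f) (a, t) ((0 : ℝ), (1 : ℝ))) t := by
  have hd : HasFDerivAt (Function.uncurry f) (fderiv ℝ (Function.uncurry f) (a, t)) (a, t) :=
    (hf.differentiable (by norm_num) (a, t)).hasFDerivAt
  have hline : HasDerivAt (fun s : ℝ => ((a : ℝ), s)) ((0 : ℝ), (1 : ℝ)) t :=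
    (hasDerivAt_const t a).prodMk (hasDerivAt_id t)
  exact hd.comp_hasDerivAt t hline

lemma aux_cont {f : ℝ → ℝ → ℝ} (hf : ContDiff ℝ 2 (Function.uncurry f)) :
    Continuous (fun p : ℝ × ℝ => fderiv ℝ (Function.uncurry f) p ((0 : ℝ), (1 : ℝ))) :=
  (hf.continuous_fderiv (by norm_num)).clm_apply continuous_const

lemma aux_deriv_eq {f : ℝ → ℝ → ℝ} (hf : ContDiff ℝ 2 (Function.uncurry f)) (a t : ℝ) :
    deriv (f a) t = fderiv ℝ (Function.uncurry f) (a, t) ((0 : ℝ), (1 : ℝ)) :=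
  (aux_hasDerivAt hf a t).deriv

/-- Generalized first-order condition. -/
theorem stmt10
    (Θ : Set (ℝ × ℝ)) (hΘopen : IsOpen Θ) (hΘconv : Convex ℝ Θ)
    (hΘbdd : Bornology.IsBounded Θ) (hΘpos : ∀ θ ∈ Θ, 0 < θ.2)
    (v z : ℝ → ℝ → ℝ)
    (hvC2 : ContDiff ℝ 2 (Function.uncurry v)) (hzC2 : ContDiff ℝ 2 (Function.uncurry z))
    (hvx : ∀ β x : ℝ, 0 < deriv (v β) x)
    (hzq : ∀ α q : ℝ, 0 < deriv (z α) q)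
    -- cross-partials: v_{βx} > 0, z_{αq} < 0
    (hvβx : ∀ β x : ℝ, 0 < deriv (fun b => deriv (v b) x) β)
    (hzαq : ∀ α q : ℝ, deriv (fun a => deriv (z a) q) α < 0)
    (hv0 : ∀ β, v β 0 = 0) (hz0 : ∀ α, z α 0 = 0)
    (x q : ℝ × ℝ → ℝ)
    (hxrange : ∀ θ ∈ Θ, x θ ∈ Icc (0:ℝ) 1)
    (hqpos : ∀ θ ∈ Θ, 0 ≤ q θ)
    -- IC with p ≡ 0
    (hIC : ∀ θ ∈ Θ, ∀ θ' ∈ Θ,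
      v θ.2 (x θ) - z θ.1 (q θ) ≥ v θ.2 (x θ') - z θ.1 (q θ'))
    -- indirect utility is continuous
    (hIU : ContinuousOn (fun θ => v θ.2 (x θ) - z θ.1 (q θ)) Θ)
    (αa βa : ℝ) (hmema : (αa, βa) ∈ Θ)
    (δ : ℕ → ℝ) (hδpos : ∀ i, 0 < δ i) (hδanti : StrictAnti δ)
    (hδ0 : Tendsto δ atTop (nhds 0))
    (hδmem : ∀ i, (αa + δ i, βa + δ i) ∈ Θ)
    (hxanti : StrictAnti (fun i => x (αa + δ i, βa + δ i)))
    (hxlim : Tendsto (fun i => x (αa + δ i, βa + δ i)) atTop (nhds (x (αa, βa))))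
    (αb βb : ℝ) (hmemb : (αb, βb) ∈ Θ)
    (hxb : x (αb, βb) = x (αa, βa)) :
    deriv (v βb) (x (αa, βa)) / deriv (z αb) (q (αa, βa)) ≤
    deriv (v βa) (x (αa, βa)) / deriv (z αa) (q (αa, βa)) := by
  have hzmono : ∀ α : ℝ, StrictMono (z α) := fun α => strictMono_of_deriv_pos (hzq α)
  have hvmono : ∀ β : ℝ, StrictMono (v β) := fun β => strictMono_of_deriv_pos (hvx β)
  -- each diagonal allocation lies strictly above the limit
  have hxgt : ∀ i, x (αa, βa) < x (αa + δ i, βa + δ i) := by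
    intro i
    have h1 : x (αa, βa) ≤ x (αa + δ (i + 1), βa + δ (i + 1)) := by
      apply le_of_tendsto hxlim
      filter_upwards [eventually_ge_atTop (i + 1)] with j hj
      exact hxanti.antitone hj
    have h2 : x (αa + δ (i + 1), βa + δ (i + 1)) < x (αa + δ i, βa + δ i) :=
      hxanti (lt_add_one i)
    linarith
  -- IC of a against the diagonal types
  have hICai : ∀ i, v βa (x (αa + δ i, βa + δ i)) - v βa (x (αa, βa)) ≤
      z αa (q (αa + δ i, βa + δ i)) - z αa (q (αa, βa)) := by
    intro i
    have h := hIC (αa, βa) hmema (αa + δ i, βa + δ i) (hδmem i)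
    dsimp only at h; linarith
  -- IC of the diagonal types against a
  have hICia : ∀ i, z (αa + δ i) (q (αa + δ i, βa + δ i)) - z (αa + δ i) (q (αa, βa)) ≤
      v (βa + δ i) (x (αa + δ i, βa + δ i)) - v (βa + δ i) (x (αa, βa)) := by
    intro i
    have h := hIC (αa + δ i, βa + δ i) (hδmem i) (αa, βa) hmema
    dsimp only at h; linarith
  have hqgt : ∀ i, q (αa, βa) < q (αa + δ i, βa + δ i) := by
    intro i
    have h1 : 0 < v βa (x (αa + δ i, βa + δ i)) - v βa (x (αa, βa)) :=
      sub_pos.2 (hvmono βa (hxgt i))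
    have h2 := hICai i
    exact (hzmono αa).lt_iff_lt.mp (by linarith)
  -- q of type b equals q of type a
  have hqb : q (αb, βb) = q (αa, βa) := by
    have h1 := hIC (αb, βb) hmemb (αa, βa) hmema
    have h2 := hIC (αa, βa) hmema (αb, βb) hmemb
    dsimp only at h1 h2
    rw [hxb] at h1 h2
    have e1 : q (αb, βb) ≤ q (αa, βa) := (hzmono αb).le_iff_le.mp (by linarith)
    have e2 : q (αa, βa) ≤ q (αb, βb) := (hzmono αa).le_iff_le.mp (by linarith)
    linarith
  -- parameter limits
  have hαlim : Tendsto (fun i => αa + δ i) atTop (nhds αa) := by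
    simpa using tendsto_const_nhds.add hδ0
  have hβlim : Tendsto (fun i => βa + δ i) atTop (nhds βa) := by
    simpa using tendsto_const_nhds.add hδ0
  -- q_i → q_a
  have hqlim : Tendsto (fun i => q (αa + δ i, βa + δ i)) atTop (nhds (q (αa, βa))) := by
    refine tendsto_order.2 ⟨fun c hc => Eventually.of_forall fun i => lt_trans hc (hqgt i), ?_⟩
    intro c hc
    have hg : Tendsto (fun i => z (αa + δ i) c - z (αa + δ i) (q (αa, βa))) atTop
        (nhds (z αa c - z αa (q (αa, βa)))) := by
      have hc1 : Tendsto (fun i => z (αa + δ i) c) atTop (nhds (z αa c)) :=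
        (hzC2.continuous.tendsto (αa, c)).comp (hαlim.prodMk_nhds tendsto_const_nhds)
      have hc2 : Tendsto (fun i => z (αa + δ i) (q (αa, βa))) atTop
          (nhds (z αa (q (αa, βa)))) :=
        (hzC2.continuous.tendsto (αa, q (αa, βa))).comp (hαlim.prodMk_nhds tendsto_const_nhds)
      exact hc1.sub hc2
    have ht : Tendsto (fun i => v (βa + δ i) (x (αa + δ i, βa + δ i)) -
        v (βa + δ i) (x (αa, βa))) atTop (nhds 0) := by
      have h1 : Tendsto (fun i => v (βa + δ i) (x (αa + δ i, βa + δ i))) atTop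
          (nhds (v βa (x (αa, βa)))) :=
        (hvC2.continuous.tendsto (βa, x (αa, βa))).comp (hβlim.prodMk_nhds hxlim)
      have h2 : Tendsto (fun i => v (βa + δ i) (x (αa, βa))) atTop
          (nhds (v βa (x (αa, βa)))) :=
        (hvC2.continuous.tendsto (βa, x (αa, βa))).comp (hβlim.prodMk_nhds tendsto_const_nhds)
      simpa using h1.sub h2
    have hpos : 0 < z αa c - z αa (q (αa, βa)) := sub_pos.2 (hzmono αa hc)
    have hev := ht.eventually_lt hg hpos
    filter_upwards [hev] with i hi
    have h2 := hICia i
    exact ((hzmono (αa + δ i)).lt_iff_lt).mp (by linarith)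
  -- convergence within the punctured neighborhoods
  have hxlim' : Tendsto (fun i => x (αa + δ i, βa + δ i)) atTop (nhdsWithin (x (αa, βa)) {x (αa, βa)}ᶜ) :=
    tendsto_nhdsWithin_iff.2 ⟨hxlim, Eventually.of_forall fun i => by simpa using (hxgt i).ne'⟩
  have hqlim' : Tendsto (fun i => q (αa + δ i, βa + δ i)) atTop (nhdsWithin (q (αa, βa)) {q (αa, βa)}ᶜ) :=
    tendsto_nhdsWithin_iff.2 ⟨hqlim, Eventually.of_forall fun i => by simpa using (hqgt i).ne'⟩
  -- slope limits for type b
  have hA : Tendsto (fun i => (v βb (x (αa + δ i, βa + δ i)) - v βb (x (αa, βa))) /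
      (x (αa + δ i, βa + δ i) - x (αa, βa))) atTop (nhds (deriv (v βb) (x (αa, βa)))) := by
    have hd : HasDerivAt (v βb) (deriv (v βb) (x (αa, βa))) (x (αa, βa)) :=
      (aux_hasDerivAt hvC2 βb (x (αa, βa))).differentiableAt.hasDerivAt
    have h := (hasDerivAt_iff_tendsto_slope.1 hd).comp hxlim'
    refine h.congr fun i => ?_
    simp [Function.comp_apply, slope_def_field]
  have hB : Tendsto (fun i => (z αb (q (αa + δ i, βa + δ i)) - z αb (q (αa, βa))) /
      (q (αa + δ i, βa + δ i) - q (αa, βa))) atTop (nhds (deriv (z αb) (q (αa, βa)))) := by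
    have hd : HasDerivAt (z αb) (deriv (z αb) (q (αa, βa))) (q (αa, βa)) :=
      (aux_hasDerivAt hzC2 αb (q (αa, βa))).differentiableAt.hasDerivAt
    have h := (hasDerivAt_iff_tendsto_slope.1 hd).comp hqlim'
    refine h.congr fun i => ?_
    simp [Function.comp_apply, slope_def_field]
  -- MVT for the varying-type slopes
  have hvdiff : ∀ β : ℝ, Differentiable ℝ (v β) :=
    fun β t => (aux_hasDerivAt hvC2 β t).differentiableAt
  have hzdiff : ∀ α : ℝ, Differentiable ℝ (z α) :=
    fun α t => (aux_hasDerivAt hzC2 α t).differentiableAt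
  have hMVTv : ∀ i, ∃ c ∈ Ioo (x (αa, βa)) (x (αa + δ i, βa + δ i)),
      deriv (v (βa + δ i)) c = (v (βa + δ i) (x (αa + δ i, βa + δ i)) - v (βa + δ i) (x (αa, βa))) /
        (x (αa + δ i, βa + δ i) - x (αa, βa)) :=
    fun i => exists_deriv_eq_slope _ (hxgt i) ((hvdiff _).continuous.continuousOn)
      ((hvdiff _).differentiableOn)
  have hMVTz : ∀ i, ∃ c ∈ Ioo (q (αa, βa)) (q (αa + δ i, βa + δ i)),
      deriv (z (αa + δ i)) c = (z (αa + δ i) (q (αa + δ i, βa + δ i)) - z (αa + δ i) (q (αa, βa))) /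
        (q (αa + δ i, βa + δ i) - q (αa, βa)) :=
    fun i => exists_deriv_eq_slope _ (hqgt i) ((hzdiff _).continuous.continuousOn)
      ((hzdiff _).differentiableOn)
  choose η hη hηeq using hMVTv
  choose ξ hξ hξeq using hMVTz
  have hηlim : Tendsto η atTop (nhds (x (αa, βa))) :=
    tendsto_of_tendsto_of_tendsto_of_le_of_le tendsto_const_nhds hxlim
      (fun i => (hη i).1.le) (fun i => (hη i).2.le)
  have hξlim : Tendsto ξ atTop (nhds (q (αa, βa))) :=
    tendsto_of_tendsto_of_tendsto_of_le_of_le tendsto_const_nhds hqlim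
      (fun i => (hξ i).1.le) (fun i => (hξ i).2.le)
  have hC : Tendsto (fun i => (v (βa + δ i) (x (αa + δ i, βa + δ i)) - v (βa + δ i) (x (αa, βa))) /
      (x (αa + δ i, βa + δ i) - x (αa, βa))) atTop (nhds (deriv (v βa) (x (αa, βa)))) := by
    have h1 : Tendsto (fun i => fderiv ℝ (Function.uncurry v) (βa + δ i, η i) ((0:ℝ), (1:ℝ)))
        atTop (nhds (fderiv ℝ (Function.uncurry v) (βa, x (αa, βa)) ((0:ℝ), (1:ℝ)))) :=
      ((aux_cont hvC2).tendsto (βa, x (αa, βa))).comp (hβlim.prodMk_nhds hηlim)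
    rw [aux_deriv_eq hvC2 βa (x (αa, βa))]
    refine h1.congr fun i => ?_
    rw [← aux_deriv_eq hvC2 (βa + δ i) (η i), hηeq i]
  have hD : Tendsto (fun i => (z (αa + δ i) (q (αa + δ i, βa + δ i)) - z (αa + δ i) (q (αa, βa))) /
      (q (αa + δ i, βa + δ i) - q (αa, βa))) atTop (nhds (deriv (z αa) (q (αa, βa)))) := by
    have h1 : Tendsto (fun i => fderiv ℝ (Function.uncurry z) (αa + δ i, ξ i) ((0:ℝ), (1:ℝ)))
        atTop (nhds (fderiv ℝ (Function.uncurry z) (αa, q (αa, βa)) ((0:ℝ), (1:ℝ)))) :=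
      ((aux_cont hzC2).tendsto (αa, q (αa, βa))).comp (hαlim.prodMk_nhds hξlim)
    rw [aux_deriv_eq hzC2 αa (q (αa, βa))]
    refine h1.congr fun i => ?_
    rw [← aux_deriv_eq hzC2 (αa + δ i) (ξ i), hξeq i]
  have hZa : (0 : ℝ) < deriv (z αa) (q (αa, βa)) := hzq αa (q (αa, βa))
  have hZb : (0 : ℝ) < deriv (z αb) (q (αa, βa)) := hzq αb (q (αa, βa))
  -- the per-index inequality
  have key : ∀ i, (v βb (x (αa + δ i, βa + δ i)) - v βb (x (αa, βa))) /
      (x (αa + δ i, βa + δ i) - x (αa, βa)) ≤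
      ((z αb (q (αa + δ i, βa + δ i)) - z αb (q (αa, βa))) /
        (q (αa + δ i, βa + δ i) - q (αa, βa))) *
      (((v (βa + δ i) (x (αa + δ i, βa + δ i)) - v (βa + δ i) (x (αa, βa))) /
        (x (αa + δ i, βa + δ i) - x (αa, βa))) /
      ((z (αa + δ i) (q (αa + δ i, βa + δ i)) - z (αa + δ i) (q (αa, βa))) /
        (q (αa + δ i, βa + δ i) - q (αa, βa)))) := by
    intro i
    have hΔx : 0 < x (αa + δ i, βa + δ i) - x (αa, βa) := sub_pos.2 (hxgt i)
    have hΔq : 0 < q (αa + δ i, βa + δ i) - q (αa, βa) := sub_pos.2 (hqgt i)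
    have hzb : 0 < z αb (q (αa + δ i, βa + δ i)) - z αb (q (αa, βa)) :=
      sub_pos.2 (hzmono αb (hqgt i))
    have hza : 0 < z (αa + δ i) (q (αa + δ i, βa + δ i)) - z (αa + δ i) (q (αa, βa)) :=
      sub_pos.2 (hzmono _ (hqgt i))
    have hvb : 0 < v βb (x (αa + δ i, βa + δ i)) - v βb (x (αa, βa)) :=
      sub_pos.2 (hvmono βb (hxgt i))
    have hvi : 0 < v (βa + δ i) (x (αa + δ i, βa + δ i)) - v (βa + δ i) (x (αa, βa)) :=
      sub_pos.2 (hvmono _ (hxgt i))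
    -- IC of b against the diagonal type
    have h1 : v βb (x (αa + δ i, βa + δ i)) - v βb (x (αa, βa)) ≤
        z αb (q (αa + δ i, βa + δ i)) - z αb (q (αa, βa)) := by
      have h := hIC (αb, βb) hmemb (αa + δ i, βa + δ i) (hδmem i)
      dsimp only at h
      rw [hxb, hqb] at h
      linarith
    have h2 := hICia i
    have hrw : ((z αb (q (αa + δ i, βa + δ i)) - z αb (q (αa, βa))) /
        (q (αa + δ i, βa + δ i) - q (αa, βa))) *
      (((v (βa + δ i) (x (αa + δ i, βa + δ i)) - v (βa + δ i) (x (αa, βa))) /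
        (x (αa + δ i, βa + δ i) - x (αa, βa))) /
      ((z (αa + δ i) (q (αa + δ i, βa + δ i)) - z (αa + δ i) (q (αa, βa))) /
        (q (αa + δ i, βa + δ i) - q (αa, βa)))) =
      ((z αb (q (αa + δ i, βa + δ i)) - z αb (q (αa, βa))) *
        (v (βa + δ i) (x (αa + δ i, βa + δ i)) - v (βa + δ i) (x (αa, βa)))) /
      ((x (αa + δ i, βa + δ i) - x (αa, βa)) *
        (z (αa + δ i) (q (αa + δ i, βa + δ i)) - z (αa + δ i) (q (αa, βa)))) := by
      field_simp
    rw [hrw, div_le_div_iff₀ hΔx (by positivity)]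
    nlinarith [mul_le_mul_of_nonneg_left (mul_le_mul h1 h2 hza.le hzb.le) hΔx.le]
  -- pass to the limit
  have hRHS := hB.mul (hC.div hD hZa.ne')
  have hfinal : deriv (v βb) (x (αa, βa)) ≤
      deriv (z αb) (q (αa, βa)) * (deriv (v βa) (x (αa, βa)) / deriv (z αa) (q (αa, βa))) :=
    le_of_tendsto_of_tendsto' hA hRHS key
  have h6 := mul_le_mul_of_nonneg_right hfinal hZa.le
  rw [mul_assoc, div_mul_cancel₀ _ hZa.ne'] at h6
  rw [div_le_div_iff₀ hZb hZa]
  linarith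
end

section
/- Suppose the designer observes α perfectly and screens with payments only. Then an allocation rule x(α,β) is equitable and implementable if and only if x(α,β) = x̂(η(α,β)) for some weakly increasing x̂. -/
/-!
Fix the observed component `α`. Within the slice of types sharing it, incentive compatibility
with payments is the classical one-dimensional screening problem: it forces the allocation to be
weakly increasing in `β`, and conversely any bounded nonnegative increasing allocation is
implemented by the envelope payment `β x(β) - ∫₀^β x`, which also leaves nonnegative utility.
An equitable allocation is `x̂ ∘ η`, so it remains to pass from monotonicity along each slice to
monotonicity of `x̂` on the merit range `η(Θ)`. Since `Θ` is open and `η` is continuous and strictly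
increasing in `β`, the merits attained on the slice through a type fill a neighbourhood of its
merit, so `x̂` is monotone near every point of `η(Θ)`; this set is connected, and local
monotonicity on a connected subset of a line propagates to global monotonicity.
-/

open Set Filter Topology MeasureTheory

section LocalToGlobal

variable {α β : Type*} [LinearOrder α] [Preorder β] {f : α → β}

theorem MonotoneOn.Icc_trans {a b c : α} (hab : MonotoneOn f (Icc a b))
    (hbc : MonotoneOn f (Icc b c)) : MonotoneOn f (Icc a c) := by
  rcases lt_or_ge b a with hba | hab'
  · exact hbc.mono (Icc_subset_Icc_left hba.le)
  rcases lt_or_ge c b with hcb | hbc'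
  · exact hab.mono (Icc_subset_Icc_right hcb.le)
  rw [← Icc_union_Icc_eq_Icc hab' hbc']
  exact hab.union_right hbc (isGreatest_Icc hab') (isLeast_Icc hbc')

theorem IsPreconnected.monotoneOn_of_locally [TopologicalSpace α] [OrderTopology α] {s : Set α}
    (hs : IsPreconnected s) (hf : ∀ x ∈ s, ∃ U ∈ 𝓝 x, MonotoneOn f U) : MonotoneOn f s := by
  have hIcc : ∀ {x y}, x ∈ s → y ∈ s → MonotoneOn f (Icc x y) := by
    intro x y hx hy
    refine hs.induction₂' (fun u v => MonotoneOn f (Icc u v)) (fun u hu => ?_)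
      (fun _ _ _ _ _ _ => MonotoneOn.Icc_trans) hx hy
    obtain ⟨U, hU, hfU⟩ := hf u hu
    filter_upwards [mem_nhdsWithin_of_mem_nhds (ordConnectedComponent_mem_nhds.2 hU)] with v hv
    have huv : uIcc u v ⊆ U := mem_ordConnectedComponent.1 hv
    exact ⟨hfU.mono (Icc_subset_uIcc.trans huv), hfU.mono (Icc_subset_uIcc'.trans huv)⟩
  intro x hx y hy hxy
  exact hIcc hx hy (left_mem_Icc.2 hxy) (right_mem_Icc.2 hxy) hxy

end LocalToGlobal

theorem StrictMono.monotoneOn_image {α β γ : Type*} [LinearOrder α] [Preorder β] [Preorder γ]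
    {g : α → β} {f : β → γ} {S : Set α} (hg : StrictMono g) (hf : MonotoneOn (f ∘ g) S) :
    MonotoneOn f (g '' S) := by
  rintro _ ⟨s, hs, rfl⟩ _ ⟨t, ht, rfl⟩ hst
  exact hf hs ht (hg.le_iff_le.1 hst)

theorem StrictMono.image_mem_nhds {α β : Type*} [ConditionallyCompleteLinearOrder α]
    [TopologicalSpace α] [OrderTopology α] [DenselyOrdered α] [NoMaxOrder α] [NoMinOrder α]
    [LinearOrder β] [TopologicalSpace β] [OrderTopology β] {g : α → β} (hg : StrictMono g)
    (hc : Continuous g) {S : Set α} {b : α} (hS : S ∈ 𝓝 b) : g '' S ∈ 𝓝 (g b) := by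
  obtain ⟨l, u, ⟨hlb, hbu⟩, hlu⟩ := mem_nhds_iff_exists_Ioo_subset.1 hS
  obtain ⟨l', hll', hl'b⟩ := exists_between hlb
  obtain ⟨u', hbu', hu'u⟩ := exists_between hbu
  have hIcc : Icc (g l') (g u') ⊆ g '' S :=
    (intermediate_value_Icc (hl'b.trans hbu').le hc.continuousOn).trans
      (image_mono ((Icc_subset_Ioo hll' hu'u).trans hlu))
  exact mem_of_superset (Icc_mem_nhds (hg hl'b) (hg hbu')) hIcc

theorem Monotone.sub_mul_le_intervalIntegral {g : ℝ → ℝ} (hg : Monotone g) (a b : ℝ) :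
    (b - a) * g a ≤ ∫ s in a..b, g s := by
  rcases le_total a b with hab | hba
  · simpa [intervalIntegral.integral_const] using intervalIntegral.integral_mono_on hab
      intervalIntegrable_const (hg.intervalIntegrable (μ := volume)) fun s hs => hg hs.1
  · have h := intervalIntegral.integral_mono_on hba (hg.intervalIntegrable (μ := volume))
      intervalIntegrable_const fun s hs => hg hs.2
    rw [intervalIntegral.integral_const, smul_eq_mul] at h
    rw [intervalIntegral.integral_symm]
    linarith

/-- Truthful reporting is optimal for a type `b ∈ I` with quasilinear utility `b * q - P`. -/
def IsIncentiveCompatible (I : Set ℝ) (q P : ℝ → ℝ) : Prop :=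
  ∀ b ∈ I, ∀ b' ∈ I, b * q b' - P b' ≤ b * q b - P b

theorem IsIncentiveCompatible.monotoneOn {I : Set ℝ} {q P : ℝ → ℝ}
    (h : IsIncentiveCompatible I q P) : MonotoneOn q I := by
  intro b hb b' hb' hbb'
  rcases hbb'.eq_or_lt with rfl | hlt
  · exact le_rfl
  have h₁ := h b hb b' hb'
  have h₂ := h b' hb' b hb
  nlinarith

theorem MonotoneOn.exists_isIncentiveCompatible {I : Set ℝ} {q : ℝ → ℝ} (hq : MonotoneOn q I)
    (hI : ∀ b ∈ I, 0 ≤ b) (hq₀ : ∀ b ∈ I, 0 ≤ q b) (hq₁ : BddAbove (q '' I)) :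
    ∃ P : ℝ → ℝ, IsIncentiveCompatible I q P ∧ ∀ b ∈ I, 0 ≤ b * q b - P b := by
  obtain ⟨g, hg, hqg⟩ := hq.exists_monotone_extension
    ⟨0, by rintro _ ⟨b, hb, rfl⟩; exact hq₀ b hb⟩ hq₁
  set z : ℝ → ℝ := fun s => max (g s) 0
  have hz : Monotone z := fun s t hst => max_le_max (hg hst) le_rfl
  have hqz : EqOn q z I := fun b hb => by simp [z, ← hqg hb, hq₀ b hb]
  refine ⟨fun b => b * q b - ∫ s in (0 : ℝ)..b, z s, fun b hb b' hb' => ?_, fun b hb => ?_⟩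
  · have hsplit := intervalIntegral.integral_add_adjacent_intervals
      (hz.intervalIntegrable (μ := volume) (a := 0) (b := b'))
      (hz.intervalIntegrable (a := b') (b := b))
    have hsub := hz.sub_mul_le_intervalIntegral b' b
    rw [← hqz hb'] at hsub
    linarith
  · simpa using intervalIntegral.integral_nonneg (hI b hb) fun s _ => le_max_right (g s) 0

theorem monotoneOn_image_of_forall_monotoneOn_slice {Θ : Set (ℝ × ℝ)} (hΘ : IsOpen Θ)
    (hΘc : IsPreconnected Θ) {η : ℝ × ℝ → ℝ} (hη : Continuous η)
    (hηβ : ∀ a, StrictMono fun b => η (a, b)) {f : ℝ → ℝ}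
    (hf : ∀ a, MonotoneOn (fun b => f (η (a, b))) {b | (a, b) ∈ Θ}) :
    MonotoneOn f (η '' Θ) := by
  refine (hΘc.image η hη.continuousOn).monotoneOn_of_locally ?_
  rintro _ ⟨⟨a, b⟩, hab, rfl⟩
  have hslice : Continuous fun b : ℝ => (a, b) := Continuous.prodMk_right a
  exact ⟨_, (hηβ a).image_mem_nhds (hη.comp hslice) ((hΘ.preimage hslice).mem_nhds hab),
    (hηβ a).monotoneOn_image (hf a)⟩

theorem stmt15_general
    (Θ : Set (ℝ × ℝ)) (hΘopen : IsOpen Θ) (hΘconv : Convex ℝ Θ)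
    (hΘpos : ∀ θ ∈ Θ, 0 < θ.2)
    (w : ℝ → ℝ) (hwpos : ∀ a, 0 < w a)
    (η : ℝ × ℝ → ℝ) (hηcont : Continuous η)
    (hηβ : ∀ a : ℝ, StrictMono fun b => η (a, b))
    (x : ℝ × ℝ → ℝ) (hxrange : ∀ θ ∈ Θ, x θ ∈ Icc (0:ℝ) 1) :
    -- equitable and implementable (IC only within each observed α-slice)
    ((∀ θ1 ∈ Θ, ∀ θ2 ∈ Θ, η θ1 = η θ2 → x θ1 = x θ2) ∧
      ∃ p : ℝ × ℝ → ℝ,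
        (∀ θ ∈ Θ, ∀ θ' ∈ Θ, θ.1 = θ'.1 →
          θ.2 * x θ - w θ.1 * p θ ≥ θ.2 * x θ' - w θ.1 * p θ') ∧
        (∀ θ ∈ Θ, 0 ≤ θ.2 * x θ - w θ.1 * p θ))
    ↔
    (∃ xhat : ℝ → ℝ, (∀ θ ∈ Θ, x θ = xhat (η θ)) ∧
      ∀ θ1 ∈ Θ, ∀ θ2 ∈ Θ, η θ1 ≤ η θ2 → xhat (η θ1) ≤ xhat (η θ2)) := by
  constructor
  · rintro ⟨hequit, p, hIC, -⟩
    set xhat := x ∘ Function.invFunOn η Θ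
    have hx : ∀ θ ∈ Θ, x θ = xhat (η θ) := fun θ hθ =>
      hequit θ hθ _ (Function.invFunOn_apply_mem hθ) (Function.invFunOn_apply_eq hθ).symm
    have hslice (a : ℝ) : MonotoneOn (fun b => xhat (η (a, b))) {b | (a, b) ∈ Θ} :=
      IsIncentiveCompatible.monotoneOn (P := fun b => w a * p (a, b))
        (fun b hb b' hb' => by simpa only [hx _ hb, hx _ hb'] using hIC _ hb _ hb' rfl)
    refine ⟨xhat, hx, fun θ1 h1 θ2 h2 => ?_⟩
    exact monotoneOn_image_of_forall_monotoneOn_slice hΘopen hΘconv.isPreconnected hηcont hηβ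
      hslice (mem_image_of_mem η h1) (mem_image_of_mem η h2)
  · rintro ⟨xhat, hx, hmono⟩
    refine ⟨fun θ1 h1 θ2 h2 he => by rw [hx θ1 h1, hx θ2 h2, he], ?_⟩
    have hslice (a : ℝ) : MonotoneOn (fun b => x (a, b)) {b | (a, b) ∈ Θ} :=
      fun s hs t ht hst => by
        simpa only [hx _ hs, hx _ ht] using hmono _ hs _ ht ((hηβ a).monotone hst)
    choose P hIC hIR using fun a => (hslice a).exists_isIncentiveCompatible
      (fun b hb => (hΘpos _ hb).le) (fun b hb => (hxrange _ hb).1)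
      ⟨1, by rintro _ ⟨b, hb, rfl⟩; exact (hxrange _ hb).2⟩
    refine ⟨fun θ => P θ.1 θ.2 / w θ.1, ?_, ?_⟩
    · rintro ⟨a, b⟩ hθ ⟨a', b'⟩ hθ' (rfl : a = a')
      simpa only [mul_div_cancel₀ _ (hwpos a).ne'] using hIC a b hθ b' hθ'
    · rintro ⟨a, b⟩ hθ
      simpa only [mul_div_cancel₀ _ (hwpos a).ne'] using hIR a b hθ

/-- With `α` observed and payments only, an allocation rule is equitable
and implementable if and only if it is a weakly increasing function of merit. -/
theorem stmt15
    (Θ : Set (ℝ × ℝ)) (hΘopen : IsOpen Θ) (hΘconv : Convex ℝ Θ)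
    (hΘbdd : Bornology.IsBounded Θ) (hΘpos : ∀ θ ∈ Θ, 0 < θ.2)
    (w : ℝ → ℝ) (hwpos : ∀ a, 0 < w a)
    (η : ℝ × ℝ → ℝ) (hηcont : Continuous η)
    (hηα : ∀ b : ℝ, StrictMono fun a => η (a, b))
    (hηβ : ∀ a : ℝ, StrictMono fun b => η (a, b))
    (x : ℝ × ℝ → ℝ) (hxrange : ∀ θ ∈ Θ, x θ ∈ Icc (0:ℝ) 1) :
    -- equitable and implementable (IC only within each observed α-slice)
    ((∀ θ1 ∈ Θ, ∀ θ2 ∈ Θ, η θ1 = η θ2 → x θ1 = x θ2) ∧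
      ∃ p : ℝ × ℝ → ℝ,
        (∀ θ ∈ Θ, ∀ θ' ∈ Θ, θ.1 = θ'.1 →
          θ.2 * x θ - w θ.1 * p θ ≥ θ.2 * x θ' - w θ.1 * p θ') ∧
        (∀ θ ∈ Θ, 0 ≤ θ.2 * x θ - w θ.1 * p θ))
    ↔
    (∃ xhat : ℝ → ℝ, (∀ θ ∈ Θ, x θ = xhat (η θ)) ∧
      ∀ θ1 ∈ Θ, ∀ θ2 ∈ Θ, η θ1 ≤ η θ2 → xhat (η θ1) ≤ xhat (η θ2)) :=
  stmt15_general Θ hΘopen hΘconv hΘpos w hwpos η hηcont hηβ x hxrange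
end

section
/- Let κ*: [λ̲, λ̄] → ℝ be C² with |κ*'| ≤ M₁ and |κ*''| ≤ M₂ on [λ̲, λ̄] ⊂ (−∞,0), and let ζ > M₂. Suppose (κ₁,λ₁), (κ₂,λ₂) satisfy κ₁ ≤ κ*(λ₁) and κ₂ > κ*(λ₂) (i.e. one point is weakly below the curve and the other strictly above). Then Δκ + Δλ·(ζ·Δλ − κ*'(λ₂)) ≥ 0, where Δκ = κ₂ − κ₁ and Δλ = λ₂ − λ₁. -/
open Set

/-- Case 2 inequality in the gradient monotonicity proof:
if `κ₁` lies weakly below the curve `κ*` and `κ₂` strictly above, with `|κ*'| ≤ M₁`,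
`|κ*''| ≤ M₂` on `[lamlo, lamhi] ⊂ (−∞,0)` and `ζ > M₂`, then
`Δκ + Δλ·(ζ·Δλ − κ*'(l₂)) ≥ 0`. -/
theorem stmt17
    (lamlo lamhi : ℝ) (hlohi : lamlo ≤ lamhi) (hneg : lamhi < 0)
    (κs : ℝ → ℝ) (hκsC2 : ContDiff ℝ 2 κs)
    (M₁ M₂ : ℝ)
    (hM₁ : ∀ l ∈ Icc lamlo lamhi, |deriv κs l| ≤ M₁)
    (hM₂ : ∀ l ∈ Icc lamlo lamhi, |deriv (deriv κs) l| ≤ M₂)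
    (ζ : ℝ) (hζ : M₂ < ζ)
    (κ₁ κ₂ l₁ l₂ : ℝ) (hl₁ : l₁ ∈ Icc lamlo lamhi) (hl₂ : l₂ ∈ Icc lamlo lamhi)
    (h₁ : κ₁ ≤ κs l₁) (h₂ : κs l₂ < κ₂) :
    0 ≤ (κ₂ - κ₁) + (l₂ - l₁) * (ζ * (l₂ - l₁) - deriv κs l₂) := by
  have hM₂0 : 0 ≤ M₂ := le_trans (abs_nonneg _) (hM₂ lamhi ⟨hlohi, le_refl _⟩)
  have hdiff : Differentiable ℝ κs := hκsC2.differentiable (by norm_num)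
  have hC1 : ContDiff ℝ 1 (deriv κs) := by
    have : ContDiff ℝ (1 + 1) κs := by exact_mod_cast hκsC2
    exact (contDiff_succ_iff_deriv.mp this).2.2
  have hdiff' : Differentiable ℝ (deriv κs) := hC1.differentiable (by norm_num)
  have hsub : uIcc l₁ l₂ ⊆ Icc lamlo lamhi := uIcc_subset_Icc hl₁ hl₂
  -- step 1: |κs' t - κs' l₂| ≤ M₂ |t - l₂| for t in uIcc
  have step1 : ∀ t ∈ uIcc l₁ l₂, |deriv κs t - deriv κs l₂| ≤ M₂ * |l₁ - l₂| := by
    intro t ht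
    have h1 : |deriv κs t - deriv κs l₂| ≤ M₂ * |t - l₂| := by
      have := (convex_uIcc l₂ t).norm_image_sub_le_of_norm_deriv_le
        (f := deriv κs) (C := M₂)
        (fun x _ => hdiff' x)
        (fun x hx => by
          simpa [Real.norm_eq_abs] using hM₂ x (hsub ((uIcc_subset_uIcc right_mem_uIcc ht) hx)))
        left_mem_uIcc right_mem_uIcc
      simpa [Real.norm_eq_abs] using this
    refine h1.trans (mul_le_mul_of_nonneg_left ?_ hM₂0)
    calc |t - l₂| = |l₂ - t| := abs_sub_comm _ _
      _ ≤ |l₂ - l₁| := abs_sub_right_of_mem_uIcc ht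
      _ = |l₁ - l₂| := abs_sub_comm _ _
  -- step 2: Taylor-type bound via MVT for g t = κs t - κs'(l₂) t
  have step2 : |(κs l₁ - deriv κs l₂ * l₁) - (κs l₂ - deriv κs l₂ * l₂)| ≤
      (M₂ * |l₁ - l₂|) * |l₁ - l₂| := by
    have hg : ∀ x, HasDerivAt (fun t => κs t - deriv κs l₂ * t)
        (deriv κs x - deriv κs l₂) x := fun x => by
      have h := ((hdiff x).hasDerivAt).sub (((hasDerivAt_id x).const_mul (deriv κs l₂)))
      rw [mul_one] at h
      exact h
    have := (convex_uIcc l₁ l₂).norm_image_sub_le_of_norm_deriv_le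
      (f := fun t => κs t - deriv κs l₂ * t)
      (fun x _ => (hg x).differentiableAt)
      (fun x hx => by
        rw [(hg x).deriv]
        simpa [Real.norm_eq_abs] using step1 x hx)
      right_mem_uIcc left_mem_uIcc
    simpa [Real.norm_eq_abs, abs_sub_comm] using this
  have habs := abs_le.mp step2
  have hsq : |l₁ - l₂| * |l₁ - l₂| = (l₂ - l₁) * (l₂ - l₁) := by
    rw [abs_mul_abs_self]; ring
  nlinarith [habs.1, hsq, mul_nonneg (sub_nonneg.2 hζ.le) (mul_self_nonneg (l₂ - l₁)),
    mul_nonneg hM₂0 (mul_self_nonneg (l₂ - l₁))]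
end

section
/- Suppose p ≡ 0, utility is v(β,x) − z(α,q), the mechanism (x,0,q) is IC, and at type (α^a,β^a) the right diagonal limits x₊^a = lim_{δ→0⁺} x(α^a+δ,β^a+δ) and q₊^a = lim_{δ→0⁺} q(α^a+δ,β^a+δ) exist with x₊^a > x^a := x(α^a,β^a), and the indirect utility is continuous at (α^a,β^a). Then q₊^a > q^a, and for any type (α^b,β^b) with x(α^b,β^b) = x^a we have [v(β^b,x₊^a) − v(β^b,x^a)] / [z(α^b,q₊^a) − z(α^b,q^a)] ≤ 1 = [v(β^a,x₊^a) − v(β^a,x^a)] / [z(α^a,q₊^a) − z(α^a,q^a)]. -/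
open Set Filter

/-- With ordeals only, if the right diagonal limits `x₊ > x^a` and `q₊`
exist at a type and the indirect utility is continuous there, then `q₊ > q^a`, and for any
type with the same allocation `x^a` the incremental-rate inequality holds with value `1`
at the original type. -/
theorem stmt19
    (Θ : Set (ℝ × ℝ))
    (v z : ℝ → ℝ → ℝ)
    (hvcont : Continuous (Function.uncurry v)) (hzcont : Continuous (Function.uncurry z))
    (hvmono : ∀ β, StrictMono (v β)) (hzmono : ∀ α, StrictMono (z α))
    (x q : ℝ × ℝ → ℝ)
    -- IC with p ≡ 0
    (hIC : ∀ θ ∈ Θ, ∀ θ' ∈ Θ,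
      v θ.2 (x θ) - z θ.1 (q θ) ≥ v θ.2 (x θ') - z θ.1 (q θ'))
    (αa βa : ℝ) (hmema : (αa, βa) ∈ Θ)
    -- diagonal translates stay in Θ for small δ > 0
    (hdiag : ∃ ε > 0, ∀ δ ∈ Ioo (0:ℝ) ε, (αa + δ, βa + δ) ∈ Θ)
    (xplus qplus : ℝ)
    (hxplus : Tendsto (fun δ => x (αa + δ, βa + δ)) (nhdsWithin 0 (Ioi 0)) (nhds xplus))
    (hqplus : Tendsto (fun δ => q (αa + δ, βa + δ)) (nhdsWithin 0 (Ioi 0)) (nhds qplus))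
    (hjump : x (αa, βa) < xplus)
    -- continuity of the indirect utility at (αa, βa) along the diagonal from the right
    (hIU : Tendsto
      (fun δ => v (βa + δ) (x (αa + δ, βa + δ)) - z (αa + δ) (q (αa + δ, βa + δ)))
      (nhdsWithin 0 (Ioi 0))
      (nhds (v βa (x (αa, βa)) - z αa (q (αa, βa))))) :
    q (αa, βa) < qplus ∧
    (v βa xplus - v βa (x (αa, βa))) / (z αa qplus - z αa (q (αa, βa))) = 1 ∧
    ∀ αb βb : ℝ, (αb, βb) ∈ Θ → x (αb, βb) = x (αa, βa) →
      (v βb xplus - v βb (x (αa, βa))) / (z αb qplus - z αb (q (αa, βa))) ≤ 1 := by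

  obtain ⟨ε, hε, hεΘ⟩ := hdiag
  have hδ0 : Tendsto (fun δ : ℝ => δ) (nhdsWithin 0 (Ioi 0)) (nhds 0) :=
    tendsto_id.mono_left nhdsWithin_le_nhds
  have hβ : Tendsto (fun δ => βa + δ) (nhdsWithin 0 (Ioi 0)) (nhds βa) := by
    simpa using hδ0.const_add βa
  have hα : Tendsto (fun δ => αa + δ) (nhdsWithin 0 (Ioi 0)) (nhds αa) := by
    simpa using hδ0.const_add αa
  have hvlim : Tendsto (fun δ => v (βa + δ) (x (αa + δ, βa + δ)))
      (nhdsWithin 0 (Ioi 0)) (nhds (v βa xplus)) := by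
    have := (hvcont.tendsto (βa, xplus)).comp (hβ.prodMk_nhds hxplus)
    exact this
  have hzlim : Tendsto (fun δ => z (αa + δ) (q (αa + δ, βa + δ)))
      (nhdsWithin 0 (Ioi 0)) (nhds (z αa qplus)) := by
    have := (hzcont.tendsto (αa, qplus)).comp (hα.prodMk_nhds hqplus)
    exact this
  have key : v βa xplus - z αa qplus = v βa (x (αa, βa)) - z αa (q (αa, βa)) :=
    tendsto_nhds_unique (hvlim.sub hzlim) hIU
  have hvpos : v βa (x (αa, βa)) < v βa xplus := hvmono βa hjump
  have hzpos : z αa (q (αa, βa)) < z αa qplus := by linarith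
  have hq : q (αa, βa) < qplus := (hzmono αa).lt_iff_lt.mp hzpos
  refine ⟨hq, ?_, ?_⟩
  · rw [show v βa xplus - v βa (x (αa, βa)) = z αa qplus - z αa (q (αa, βa)) by linarith]
    exact div_self (by linarith)
  · intro αb βb hmemb hxb
    have hICab := hIC (αa, βa) hmema (αb, βb) hmemb
    simp only [hxb] at hICab
    have hqab : q (αa, βa) ≤ q (αb, βb) := (hzmono αa).le_iff_le.mp (by linarith)
    have hvlimb : Tendsto (fun δ => v βb (x (αa + δ, βa + δ)))
        (nhdsWithin 0 (Ioi 0)) (nhds (v βb xplus)) := by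
      have := (hvcont.tendsto (βb, xplus)).comp (tendsto_const_nhds.prodMk_nhds hxplus)
      exact this
    have hzlimb : Tendsto (fun δ => z αb (q (αa + δ, βa + δ)))
        (nhdsWithin 0 (Ioi 0)) (nhds (z αb qplus)) := by
      have := (hzcont.tendsto (αb, qplus)).comp (tendsto_const_nhds.prodMk_nhds hqplus)
      exact this
    have hev : ∀ᶠ δ in nhdsWithin (0:ℝ) (Ioi 0),
        v βb (x (αa + δ, βa + δ)) - z αb (q (αa + δ, βa + δ)) ≤
          v βb (x (αa, βa)) - z αb (q (αb, βb)) := by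
      filter_upwards [Ioo_mem_nhdsGT_of_mem (show (0:ℝ) ∈ Ico 0 ε from ⟨le_refl 0, hε⟩)]
        with δ hδ
      have := hIC (αb, βb) hmemb (αa + δ, βa + δ) (hεΘ δ hδ)
      simp only [hxb] at this
      linarith
    have hle : v βb xplus - z αb qplus ≤ v βb (x (αa, βa)) - z αb (q (αb, βb)) :=
      le_of_tendsto (hvlimb.sub hzlimb) hev
    have hzb : z αb (q (αa, βa)) ≤ z αb (q (αb, βb)) := (hzmono αb).monotone hqab
    have hden : 0 < z αb qplus - z αb (q (αa, βa)) := by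
      have := hzmono αb hq; linarith
    exact (div_le_one hden).mpr (by linarith)
end
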